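/- arXiv:2506.09020 — 6 statements merged into one kernel-verified Lean document; each statement's English description precedes it below -/
import Mathlib

section
/- Let V be a finite set, t, q positive integers, and N = (t!)²·q^{t+1}. Given any N vectors x₁, …, x_N ∈ V^t, each having pairwise distinct entries, there exist q of them, y₁, …, y_q, such that: (1) for each coordinate j ∈ {1,…,t}, the entries (y₁)_j, …, (y_q)_j are either all equal or pairwise distinct; and (2) the sets Y_j = {(y₁)_j, …, (y_q)_j} for j = 1, …, t are pairwise disjoint. -/
open Function Finset

theorem aux_stmt1 : ∀ (t : ℕ) {V : Type*} (q : ℕ), 0 < q →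
    ∀ (x : Fin (t.factorial ^ 2 * q ^ (t + 1)) → Fin t → V),
    (∀ i, Function.Injective (x i)) →
    ∃ σ : Fin q → Fin (t.factorial ^ 2 * q ^ (t + 1)),
      Function.Injective σ ∧
      (∀ j, (∀ i i', x (σ i) j = x (σ i') j) ∨ Function.Injective (fun i => x (σ i) j)) ∧
      (∀ j j', j ≠ j' → ∀ i i', x (σ i) j ≠ x (σ i') j') := by
  intro t
  induction t with
  | zero =>
    intro V q hq x hx
    refine ⟨Fin.cast (by simp), Fin.cast_injective _, fun j => j.elim0, fun j => j.elim0⟩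
  | succ s IH =>
    intro V q hq x hx
    classical
    have hNpos : 0 < (s+1).factorial ^ 2 * q ^ (s + 1 + 1) := by positivity
    have hNM : (s+1).factorial ^ 2 * q ^ (s + 1 + 1)
        = (s+1)^2 * q * (s.factorial ^ 2 * q ^ (s + 1)) := by
      rw [Nat.factorial_succ]; ring
    obtain ⟨S, hSP, hSmax⟩ :
        ∃ S : Finset (Fin ((s+1).factorial ^ 2 * q ^ (s + 1 + 1))),
          (∀ a ∈ S, ∀ b ∈ S, a ≠ b → ∀ j j', x a j ≠ x b j') ∧
          ∀ S' : Finset (Fin ((s+1).factorial ^ 2 * q ^ (s + 1 + 1))),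
            (∀ a ∈ S', ∀ b ∈ S', a ≠ b → ∀ j j', x a j ≠ x b j') → S'.card ≤ S.card := by
      obtain ⟨S, hS, hmax⟩ := Finset.exists_max_image
        (Finset.univ.powerset.filter
          (fun S => ∀ a ∈ S, ∀ b ∈ S, a ≠ b → ∀ j j', x a j ≠ x b j')) Finset.card
        ⟨∅, Finset.mem_filter.mpr ⟨by simp, fun a ha => absurd ha (Finset.notMem_empty a)⟩⟩
      exact ⟨S, (Finset.mem_filter.mp hS).2,
        fun S' hS' => hmax S' (Finset.mem_filter.mpr ⟨by simp, hS'⟩)⟩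
    by_cases hcard : q ≤ S.card
    · -- q pairwise disjoint vectors
      have hfmem : ∀ i, S.orderEmbOfCardLe hcard i ∈ S :=
        fun i => S.orderEmbOfCardLe_mem hcard i
      refine ⟨fun i => S.orderEmbOfCardLe hcard i,
        fun a b h => (S.orderEmbOfCardLe hcard).injective h, ?_, ?_⟩
      · intro j
        right
        intro i i' h
        by_contra hne
        exact hSP _ (hfmem i) _ (hfmem i')
          (fun e => hne ((S.orderEmbOfCardLe hcard).injective e)) j j h
      · intro j j' hjj i i' h
        beta_reduce at h
        by_cases hfe : S.orderEmbOfCardLe hcard i = S.orderEmbOfCardLe hcard i'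
        · rw [hfe] at h; exact hjj (hx _ h)
        · exact hSP _ (hfmem i) _ (hfmem i') hfe j j' h
    · push_neg at hcard
      have hmeet : ∀ i, ∃ p : Fin (s+1) × Fin ((s+1).factorial ^ 2 * q ^ (s + 1 + 1)) × Fin (s+1),
          p.2.1 ∈ S ∧ x i p.1 = x p.2.1 p.2.2 := by
        intro i
        by_cases hi : i ∈ S
        · exact ⟨(0, i, 0), hi, rfl⟩
        · by_contra hcon
          push_neg at hcon
          have key : ∀ a ∈ S, ∀ j j' : Fin (s+1), x i j ≠ x a j' :=
            fun a ha j j' e => hcon (j, a, j') ha e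
          have hins : ∀ a ∈ insert i S, ∀ b ∈ insert i S, a ≠ b → ∀ j j', x a j ≠ x b j' := by
            intro a ha b hb hab j j' e
            rcases Finset.mem_insert.mp ha with ha1 | ha1 <;>
              rcases Finset.mem_insert.mp hb with hb1 | hb1
            · exact hab (ha1.trans hb1.symm)
            · rw [ha1] at e; exact key b hb1 j j' e
            · rw [hb1] at e; exact key a ha1 j' j e.symm
            · exact hSP a ha1 b hb1 hab j j' e
          have := hSmax _ hins
          rw [Finset.card_insert_of_notMem hi] at this
          omega
      set c := fun i => (hmeet i).choose with hc
      have hc1 : ∀ i, (c i).2.1 ∈ S := fun i => (hmeet i).choose_spec.1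
      have hc2 : ∀ i, x i (c i).1 = x (c i).2.1 (c i).2.2 := fun i => (hmeet i).choose_spec.2
      have hSne : S.Nonempty := ⟨(c ⟨0, hNpos⟩).2.1, hc1 ⟨0, hNpos⟩⟩
      have hmaps : ∀ i ∈ (Finset.univ : Finset (Fin ((s+1).factorial ^ 2 * q ^ (s + 1 + 1)))),
          c i ∈ Finset.univ ×ˢ S ×ˢ Finset.univ := by
        intro i _
        simp only [Finset.mem_product, Finset.mem_univ, true_and, and_true]
        exact hc1 i
      have hTcard : (Finset.univ ×ˢ S ×ˢ Finset.univ :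
            Finset (Fin (s+1) × Fin ((s+1).factorial ^ 2 * q ^ (s + 1 + 1)) × Fin (s+1))).card
            * (s.factorial ^ 2 * q ^ (s + 1))
          ≤ (Finset.univ : Finset (Fin ((s+1).factorial ^ 2 * q ^ (s + 1 + 1)))).card := by
        have hTc : (Finset.univ ×ˢ S ×ˢ Finset.univ :
            Finset (Fin (s+1) × Fin ((s+1).factorial ^ 2 * q ^ (s + 1 + 1)) × Fin (s+1))).card
            = (s+1) * (S.card * (s+1)) := by
          simp [Finset.card_product]
        have hle : (s+1) * (S.card * (s+1)) * (s.factorial ^ 2 * q ^ (s + 1))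
            ≤ (s+1)^2 * q * (s.factorial ^ 2 * q ^ (s + 1)) := by
          nlinarith [le_of_lt hcard]
        rw [hTc, Finset.card_univ, Fintype.card_fin]
        exact le_of_le_of_eq hle hNM.symm
      obtain ⟨⟨jj, a0, j0⟩, _, hfib⟩ :=
        Finset.exists_le_card_fiber_of_mul_le_card_of_maps_to hmaps
          ⟨(0, hSne.choose, 0), by
            simp only [Finset.mem_product, Finset.mem_univ, true_and, and_true]
            exact hSne.choose_spec⟩ hTcard
      obtain ⟨F, hFsub, hFcard⟩ := Finset.exists_subset_card_eq hfib
      have hg : s.factorial ^ 2 * q ^ (s + 1) ≤ F.card := le_of_eq hFcard.symm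
      set g := fun i => F.orderEmbOfCardLe hg i with hgdef
      have hginj : Function.Injective g := fun a b h => (F.orderEmbOfCardLe hg).injective h
      have hgval : ∀ i, x (g i) jj = x a0 j0 := by
        intro i
        have hmem := hFsub (F.orderEmbOfCardLe_mem hg i)
        rw [Finset.mem_filter] at hmem
        have e1 : (c (g i)).1 = jj := by rw [hmem.2]
        have e2 : (c (g i)).2.1 = a0 := by rw [hmem.2]
        have e3 : (c (g i)).2.2 = j0 := by rw [hmem.2]
        rw [← e1, ← e2, ← e3]
        exact hc2 (g i)
      have hx' : ∀ i, Function.Injective (fun k => x (g i) (jj.succAbove k)) :=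
        fun i _ _ h => Fin.succAbove_right_injective (hx (g i) h)
      obtain ⟨σ', hσ'inj, hσ'cond, hσ'disj⟩ := IH q hq (fun i k => x (g i) (jj.succAbove k)) hx'
      refine ⟨fun i => g (σ' i), fun a b h => hσ'inj (hginj h), ?_, ?_⟩
      · intro j
        by_cases hj : j = jj
        · left; intro i i'; rw [hj, hgval, hgval]
        · obtain ⟨k, rfl⟩ := Fin.exists_succAbove_eq hj
          rcases hσ'cond k with hcst | hinj
          · left; intro i i'; exact hcst i i'
          · right; intro i i' h; exact hinj h
      · intro j j' hjj' i i' h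
        beta_reduce at h
        by_cases hj : j = jj
        · by_cases hj' : j' = jj
          · exact hjj' (hj.trans hj'.symm)
          · rw [hj, hgval] at h
            rw [← hgval (σ' i')] at h
            exact hj' (hx (g (σ' i')) h.symm)
        · by_cases hj' : j' = jj
          · rw [hj', hgval] at h
            rw [← hgval (σ' i)] at h
            exact hj (hx (g (σ' i)) h)
          · obtain ⟨k, rfl⟩ := Fin.exists_succAbove_eq hj
            obtain ⟨k', rfl⟩ := Fin.exists_succAbove_eq hj'
            have hkk : k ≠ k' := fun e => hjj' (by rw [e])
            exact hσ'disj k k' hkk i i' h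

theorem stmt_1 {V : Type*} [Finite V] (t q : ℕ) (ht : 0 < t) (hq : 0 < q)
    (x : Fin (t.factorial ^ 2 * q ^ (t + 1)) → Fin t → V)
    (hx : ∀ i, Function.Injective (x i)) :
    ∃ σ : Fin q → Fin (t.factorial ^ 2 * q ^ (t + 1)),
      Function.Injective σ ∧
      (∀ j : Fin t, (∀ i i' : Fin q, x (σ i) j = x (σ i') j) ∨
        Function.Injective (fun i : Fin q => x (σ i) j)) ∧
      (∀ j j' : Fin t, j ≠ j' → ∀ i i' : Fin q, x (σ i) j ≠ x (σ i') j') := by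
  exact aux_stmt1 t q hq x hx
end

section
/- Let T be a tree on t vertices, and let G be an n-vertex K_{s,s}-free graph that is K-almost-regular (i.e., Δ(G) ≤ K·δ(G)) with average degree d = 2e(G)/n ≥ (4Kt)^{6s}·s³. Then the number of labeled induced copies of T in G is at least n·(d/(2K))^{t-1}. -/
open SimpleGraph

/-- `G` contains no (not necessarily induced) subgraph isomorphic to `K_{s,s}`. -/
def KssFree {V : Type*} (s : ℕ) (G : SimpleGraph V) : Prop :=
  ∀ f : completeBipartiteGraph (Fin s) (Fin s) →g G, ¬ Function.Injective f

/-!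
Order the vertices of `T` by distance from a root, so that every vertex but the first has
exactly one earlier neighbour, and embed `T` greedily along this order. For the copy to stay
induced, a new vertex must be adjacent to the image of its parent and to no other image; we keep
the images at pairwise codegree less than `m = ⌊d / (4Kt)⌋`, so fewer than `t m ≤ d / (4K)`
neighbours of the parent's image are excluded by this. To keep the invariant, the new vertex must
also avoid the vertices of codegree at least `m` with some image; double counting `s`-sets of
common neighbours and using `K_{s,s}`-freeness, each vertex has at most
`s (Δ / (m + 1 - s))^s ≤ s (4Kt)^(2s)` such vertices. As every degree is at least `d / K`, at
least `d / (2K)` choices remain at each of the `t - 1` steps.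
-/

open Finset

namespace SimpleGraph

def IsTreeOrdered {n : ℕ} (H : SimpleGraph (Fin n)) : Prop :=
  ∀ k : Fin n, 0 < (k : ℕ) → ∃! j, j < k ∧ H.Adj j k

section TreeOrder

variable {α : Type*} {T : SimpleGraph α}

lemma IsTree.existsUnique_adj_dist_add_one (hT : T.IsTree) (r : α) {v : α} (hv : v ≠ r) :
    ∃! u, T.Adj u v ∧ T.dist r u + 1 = T.dist r v := by
  obtain ⟨P, -, hP⟩ := hT.connected.exists_path_of_dist r v
  have hPnil : ¬ P.Nil := fun h => hv h.eq.symm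
  have hPpos : 0 < P.length := Walk.not_nil_iff_lt_length.mp hPnil
  refine ⟨P.penultimate, ⟨P.adj_penultimate hPnil, ?_⟩, ?_⟩
  · have := (dist_le P.dropLast).trans_eq (Walk.length_dropLast P)
    have := hT.dist_eq_dist_add_one_of_adj r (P.adj_penultimate hPnil)
    omega
  · rintro u ⟨hu, hdu⟩
    obtain ⟨Q, -, hQ⟩ := hT.connected.exists_path_of_dist r u
    have hQv : (Q.concat hu).IsPath :=
      (Q.concat hu).isPath_of_length_eq_dist (by rw [Walk.length_concat, hQ, hdu])
    have hPv : (P.dropLast.concat (P.adj_penultimate hPnil)).IsPath := by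
      rw [Walk.concat_dropLast]; exact P.isPath_of_length_eq_dist hP
    exact (Walk.concat_inj ((hT.existsUnique_path r v).unique hQv hPv)).1

theorem IsTree.exists_isTreeOrdered [Finite α] (hT : T.IsTree) :
    ∃ (n : ℕ) (e : Fin (n + 1) ≃ α), (T.comap e).IsTreeOrdered := by
  obtain ⟨r⟩ := hT.connected.nonempty
  obtain ⟨N, ⟨e₀⟩⟩ := Finite.exists_equiv_fin α
  obtain ⟨n, rfl⟩ := Nat.exists_eq_succ_of_ne_zero (e₀ r).pos.ne'
  let key : Fin (n + 1) → ℕ := fun i => T.dist r (e₀.symm i)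
  set e : Fin (n + 1) ≃ α := (Tuple.sort key).trans e₀.symm
  have hmono : ∀ {i j}, i ≤ j → T.dist r (e i) ≤ T.dist r (e j) :=
    fun h => Tuple.monotone_sort key h
  refine ⟨n, e, fun k hk => ?_⟩
  have hkr : e k ≠ r := by
    intro h
    have h0 : T.dist r (e 0) = 0 := by simpa [h] using hmono (Fin.zero_le k)
    rw [hT.connected.dist_eq_zero_iff, ← h] at h0
    exact (Fin.pos_iff_ne_zero.mp hk) (e.injective h0)
  obtain ⟨u, ⟨hu, hdu⟩, huniq⟩ := hT.existsUnique_adj_dist_add_one r hkr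
  refine ⟨e.symm u, ⟨?_, by simpa using hu⟩, ?_⟩
  · by_contra! hle
    have := hmono hle
    rw [Equiv.apply_symm_apply] at this
    omega
  · rintro j ⟨hjk, hj⟩
    rw [comap_adj] at hj
    have := hmono hjk.le
    have := hT.dist_eq_dist_add_one_of_adj r hj
    rw [Equiv.eq_symm_apply]
    exact huniq (e j) ⟨hj, by omega⟩

end TreeOrder

lemma IsTreeOrdered.comap_castSucc {n : ℕ} {H : SimpleGraph (Fin (n + 1))} (h : H.IsTreeOrdered) :
    (H.comap Fin.castSucc).IsTreeOrdered := by
  intro k hk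
  obtain ⟨j, ⟨hjk, hj⟩, huniq⟩ := h k.castSucc hk
  have hj' : j ≠ Fin.last n := Fin.ne_last_of_lt hjk
  refine ⟨j.castPred hj', ⟨(Fin.castPred_lt_iff hj').mpr hjk, by simpa⟩, ?_⟩
  rintro i ⟨hik, hi⟩
  rw [← Fin.castSucc_inj, Fin.castSucc_castPred]
  exact huniq i.castSucc ⟨Fin.castSucc_lt_castSucc_iff.mpr hik, hi⟩

lemma IsTreeOrdered.exists_adj_last_iff {n : ℕ} {H : SimpleGraph (Fin (n + 2))}
    (h : H.IsTreeOrdered) :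
    ∃ p : Fin (n + 1), ∀ i, H.Adj i.castSucc (Fin.last _) ↔ i = p := by
  obtain ⟨j, ⟨hjk, hj⟩, huniq⟩ := h (Fin.last _) (Nat.succ_pos _)
  have hj' : j ≠ Fin.last _ := Fin.ne_last_of_lt hjk
  refine ⟨j.castPred hj', fun i => ⟨fun hi => ?_, ?_⟩⟩
  · rw [← Fin.castSucc_inj, Fin.castSucc_castPred]
    exact huniq i.castSucc ⟨Fin.castSucc_lt_last i, hi⟩
  · rintro rfl
    simpa using hj

end SimpleGraph

namespace SimpleGraph

variable {V : Type*} [Fintype V] [DecidableEq V] (G : SimpleGraph V) [DecidableRel G.Adj]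

def codegree (u v : V) : ℕ := #(G.neighborFinset u ∩ G.neighborFinset v)

lemma codegree_comm (u v : V) : G.codegree u v = G.codegree v u := by
  rw [codegree, codegree, inter_comm]

def highCodegreeSet (m : ℕ) (u : V) : Finset V := {z | m ≤ G.codegree z u}

end SimpleGraph

section KssFree

variable {V : Type*} [Fintype V] [DecidableEq V] {G : SimpleGraph V} [DecidableRel G.Adj]
  {s : ℕ}

lemma KssFree.card_filter_subset_neighborFinset_lt (hfree : KssFree s G) {S : Finset V}
    (hS : #S = s) : #{z | S ⊆ G.neighborFinset z} < s := by
  by_contra! h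
  obtain ⟨Z, hZ, hZs⟩ := exists_subset_card_eq h
  refine hfree (Copy.completeBipartiteGraph S Z (by simpa) (by simpa) ?_).toHom
    (Copy.injective _)
  intro x hx z hz
  simpa [adj_comm] using (mem_filter.mp (hZ hz)).2 hx

lemma KssFree.card_highCodegreeSet_mul_choose_le (hfree : KssFree s G) (m : ℕ) (u : V) :
    #(G.highCodegreeSet m u) * m.choose s ≤ (G.degree u).choose s * (s - 1) := by
  rw [← card_neighborFinset_eq_degree, ← card_powersetCard]
  refine card_mul_le_card_mul (fun z S => S ⊆ G.neighborFinset z) (fun z hz => ?_)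
    (fun S hS => ?_)
  · have hfilter : (powersetCard s (G.neighborFinset u)).bipartiteAbove
        (fun z S => S ⊆ G.neighborFinset z) z =
          powersetCard s (G.neighborFinset z ∩ G.neighborFinset u) := by
      ext S
      simp only [bipartiteAbove, mem_filter, mem_powersetCard, subset_inter_iff]
      tauto
    rw [hfilter, card_powersetCard]
    exact Nat.choose_le_choose s (mem_filter.mp hz).2
  · have := hfree.card_filter_subset_neighborFinset_lt (mem_powersetCard.mp hS).2
    refine (Nat.le_sub_one_of_lt (lt_of_le_of_lt (card_le_card ?_) this))
    intro z hz
    simp only [bipartiteBelow, mem_filter] at hz ⊢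
    exact ⟨mem_univ z, hz.2⟩

lemma KssFree.card_highCodegreeSet_mul_pow_le (hfree : KssFree s G) (m : ℕ) (u : V) :
    #(G.highCodegreeSet m u) * (m + 1 - s) ^ s ≤ s * G.degree u ^ s := by
  calc #(G.highCodegreeSet m u) * (m + 1 - s) ^ s
      ≤ #(G.highCodegreeSet m u) * (s.factorial * m.choose s) := by
        rw [← Nat.descFactorial_eq_factorial_mul_choose]
        exact Nat.mul_le_mul_left _ (Nat.pow_sub_le_descFactorial m s)
    _ ≤ s.factorial * ((G.degree u).choose s * (s - 1)) := by
        rw [mul_left_comm]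
        exact Nat.mul_le_mul_left _ (hfree.card_highCodegreeSet_mul_choose_le m u)
    _ = (s - 1) * (G.degree u).descFactorial s := by
        rw [Nat.descFactorial_eq_factorial_mul_choose]; ring
    _ ≤ (s - 1) * G.degree u ^ s := Nat.mul_le_mul_left _ (Nat.descFactorial_le_pow _ _)
    _ ≤ s * G.degree u ^ s := Nat.mul_le_mul_right _ (Nat.sub_le s 1)

lemma KssFree.card_highCodegreeSet_le (hfree : KssFree s G) {m : ℕ} {u : V} {x D : ℝ}
    (hx : 0 < x) (hxm : x ≤ m + 1 - s) (hD : G.degree u ≤ D) :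
    (#(G.highCodegreeSet m u) : ℝ) ≤ s * (D / x) ^ s := by
  have hsm : s ≤ m + 1 := by exact_mod_cast (show (s : ℝ) ≤ m + 1 by linarith)
  have key : (#(G.highCodegreeSet m u) : ℝ) * ((m + 1 - s : ℕ) : ℝ) ^ s ≤
      s * G.degree u ^ s := by
    exact_mod_cast hfree.card_highCodegreeSet_mul_pow_le m u
  push_cast [hsm] at key
  rw [div_pow, ← mul_div_assoc, le_div_iff₀ (by positivity)]
  calc (#(G.highCodegreeSet m u) : ℝ) * x ^ s
      ≤ #(G.highCodegreeSet m u) * ((m : ℝ) + 1 - s) ^ s := by gcongr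
    _ ≤ s * G.degree u ^ s := key
    _ ≤ s * D ^ s := by gcongr

lemma KssFree.card_highCodegreeSet_floor_div_le (hfree : KssFree s G) {K A d : ℝ} {u : V}
    (hK : 0 < K) (hA : 2 * K ≤ A) (hd : 0 < d) (hsA : 2 * s * A ≤ d)
    (hu : G.degree u ≤ K * d) :
    (#(G.highCodegreeSet ⌊d / A⌋₊ u) : ℝ) ≤ s * (A ^ 2) ^ s := by
  have hA0 : 0 < A := by linarith
  have hx : d / (2 * A) ≤ ⌊d / A⌋₊ + 1 - s := by
    have := Nat.lt_floor_add_one (d / A)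
    have : (s : ℝ) ≤ d / (2 * A) := by rw [le_div_iff₀ (by positivity)]; linarith
    have : d / A = 2 * (d / (2 * A)) := by field_simp
    linarith
  have hKA : K * d / (d / (2 * A)) ≤ A ^ 2 := by
    rw [show K * d / (d / (2 * A)) = 2 * K * A by field_simp]
    nlinarith
  refine (hfree.card_highCodegreeSet_le (by positivity) hx hu).trans ?_
  gcongr

end KssFree

namespace SimpleGraph

variable {V : Type*} [Fintype V] [DecidableEq V] (G : SimpleGraph V) [DecidableRel G.Adj]

def IsSparseCopy {n : ℕ} (m : ℕ) (H : SimpleGraph (Fin n)) (f : Fin n → V) : Prop :=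
  Function.Injective f ∧ (∀ i j, G.Adj (f i) (f j) ↔ H.Adj i j) ∧
    ∀ i j, i ≠ j → G.codegree (f i) (f j) < m

open Classical in
noncomputable def sparseCopies {n : ℕ} (m : ℕ) (H : SimpleGraph (Fin n)) :
    Finset (Fin n → V) :=
  {f | G.IsSparseCopy m H f}

/-- The admissible images of a new vertex whose only earlier neighbour is `p`. -/
def extensionCandidates {n : ℕ} (m : ℕ) (f : Fin n → V) (p : Fin n) : Finset V :=
  {y ∈ G.neighborFinset (f p) |
    ∀ i, y ≠ f i ∧ G.codegree y (f i) < m ∧ (i ≠ p → ¬ G.Adj (f i) y)}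

variable {G}

lemma mem_sparseCopies {n m : ℕ} {H : SimpleGraph (Fin n)} {f : Fin n → V} :
    f ∈ G.sparseCopies m H ↔ G.IsSparseCopy m H f := by
  simp [sparseCopies]

lemma IsSparseCopy.snoc {n m : ℕ} {H : SimpleGraph (Fin (n + 1))} {f : Fin n → V}
    (hf : G.IsSparseCopy m (H.comap Fin.castSucc) f) {p : Fin n}
    (hp : ∀ i, H.Adj i.castSucc (Fin.last n) ↔ i = p) {y : V}
    (hy : y ∈ G.extensionCandidates m f p) : G.IsSparseCopy m H (Fin.snoc f y) := by
  obtain ⟨hinj, hadj, hcod⟩ := hf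
  simp only [extensionCandidates, mem_filter, mem_neighborFinset] at hy
  obtain ⟨hpy, hy⟩ := hy
  have hadj_last : ∀ i, G.Adj (f i) y ↔ H.Adj i.castSucc (Fin.last n) := by
    intro i
    rw [hp]
    by_cases hi : i = p
    · simp [hi, hpy]
    · simp [hi, (hy i).2.2 hi]
  refine ⟨Fin.snoc_injective_of_injective hinj ?_, ?_, ?_⟩
  · rintro ⟨i, rfl⟩
    exact (hy i).1 rfl
  · simp only [Fin.forall_fin_succ', Fin.snoc_castSucc, Fin.snoc_last]
    refine ⟨fun i => ⟨fun j => hadj i j, hadj_last i⟩, fun j => ?_, ?_⟩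
    · rw [G.adj_comm, H.adj_comm]; exact hadj_last j
    · simp
  · simp only [Fin.forall_fin_succ', Fin.snoc_castSucc, Fin.snoc_last, ne_eq,
      Fin.castSucc_inj, Fin.castSucc_ne_last, (Fin.castSucc_ne_last _).symm]
    refine ⟨fun i => ⟨fun j => hcod i j, fun _ => ?_⟩, fun j _ => (hy j).2.1, by simp⟩
    rw [codegree_comm]; exact (hy i).2.1

lemma degree_le_card_extensionCandidates_add {n m : ℕ} {f : Fin n → V}
    (hf : ∀ i j, i ≠ j → G.codegree (f i) (f j) < m) (p : Fin n) :
    G.degree (f p) ≤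
      #(G.extensionCandidates m f p) + ∑ i, (1 + #(G.highCodegreeSet m (f i)) + m) := by
  let forbidden : Fin n → Finset V := fun i =>
    insert (f i) (G.highCodegreeSet m (f i) ∪
      {y ∈ G.neighborFinset (f i) ∩ G.neighborFinset (f p) | i ≠ p})
  have hcover : {y ∈ G.neighborFinset (f p) |
      ¬ ∀ i, y ≠ f i ∧ G.codegree y (f i) < m ∧ (i ≠ p → ¬ G.Adj (f i) y)} ⊆
        univ.biUnion forbidden := by
    intro y
    simp only [forbidden, mem_filter, mem_biUnion, mem_insert, mem_union, mem_inter,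
      mem_neighborFinset, highCodegreeSet, mem_univ, true_and]
    push Not
    rintro ⟨hpy, i, hi⟩
    refine ⟨i, ?_⟩
    by_cases h1 : y = f i
    · exact Or.inl h1
    by_cases h2 : G.codegree y (f i) < m
    · exact Or.inr (Or.inr ⟨⟨(hi h1 h2).2, hpy⟩, (hi h1 h2).1⟩)
    · exact Or.inr (Or.inl (not_lt.mp h2))
  have hforbidden : ∀ i, #(forbidden i) ≤ 1 + #(G.highCodegreeSet m (f i)) + m := by
    intro i
    have hcod : #{y ∈ G.neighborFinset (f i) ∩ G.neighborFinset (f p) | i ≠ p} ≤ m := by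
      by_cases hi : i = p
      · simp [hi]
      · simpa [hi, codegree] using (hf i p hi).le
    have := card_union_le (G.highCodegreeSet m (f i))
      {y ∈ G.neighborFinset (f i) ∩ G.neighborFinset (f p) | i ≠ p}
    have := card_insert_le (f i) (G.highCodegreeSet m (f i) ∪
      {y ∈ G.neighborFinset (f i) ∩ G.neighborFinset (f p) | i ≠ p})
    change #(insert _ _) ≤ _
    omega
  rw [← card_neighborFinset_eq_degree, ← card_filter_add_card_filter_not
    (fun y => ∀ i, y ≠ f i ∧ G.codegree y (f i) < m ∧ (i ≠ p → ¬ G.Adj (f i) y))]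
  refine Nat.add_le_add_left ?_ _
  calc _ ≤ #(univ.biUnion forbidden) := card_le_card hcover
    _ ≤ ∑ i, #(forbidden i) := card_biUnion_le
    _ ≤ _ := sum_le_sum fun i _ => hforbidden i

lemma le_card_extensionCandidates {n m : ℕ} {f : Fin n → V}
    (hf : ∀ i j, i ≠ j → G.codegree (f i) (f j) < m) {p : Fin n} {B c : ℝ}
    (hB : ∀ u, (#(G.highCodegreeSet m u) : ℝ) ≤ B)
    (hdeg : n * (1 + m + B) + c ≤ G.degree (f p)) :
    c ≤ #(G.extensionCandidates m f p) := by
  have key : (G.degree (f p) : ℝ) ≤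
      #(G.extensionCandidates m f p) + ∑ i, (1 + (#(G.highCodegreeSet m (f i)) : ℝ) + m) := by
    exact_mod_cast degree_le_card_extensionCandidates_add hf p
  have hsum : ∑ i, (1 + (#(G.highCodegreeSet m (f i)) : ℝ) + m) ≤ n * (1 + m + B) := by
    calc _ ≤ ∑ _i : Fin n, (1 + m + B) := sum_le_sum fun i _ => by linarith [hB (f i)]
      _ = n * (1 + m + B) := by rw [sum_const, card_univ, Fintype.card_fin, nsmul_eq_mul]
  linarith

lemma card_sparseCopies_comap_castSucc_mul_le {n m : ℕ} {H : SimpleGraph (Fin (n + 1))}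
    {p : Fin n} (hp : ∀ i, H.Adj i.castSucc (Fin.last n) ↔ i = p) {c : ℝ}
    (hc : ∀ f ∈ G.sparseCopies m (H.comap Fin.castSucc), c ≤ #(G.extensionCandidates m f p)) :
    #(G.sparseCopies m (H.comap Fin.castSucc)) * c ≤ #(G.sparseCopies m H) := by
  set S := G.sparseCopies m (H.comap Fin.castSucc)
  let extend : (_ : Fin n → V) × V → Fin (n + 1) → V := fun x => Fin.snoc x.1 x.2
  have hinj : Set.InjOn extend (S.sigma fun f => G.extensionCandidates m f p) := by
    rintro ⟨f, y⟩ - ⟨f', y'⟩ - h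
    obtain ⟨rfl, rfl⟩ := Fin.snoc_injective2 h
    rfl
  have hmaps : Set.MapsTo extend (S.sigma fun f => G.extensionCandidates m f p)
      (G.sparseCopies m H) := by
    rintro ⟨f, y⟩ hfy
    rw [mem_coe, mem_sigma] at hfy
    exact mem_sparseCopies.mpr ((mem_sparseCopies.mp hfy.1).snoc hp hfy.2)
  calc #S * c = ∑ _f ∈ S, c := by simp [mul_comm]
    _ ≤ ∑ f ∈ S, (#(G.extensionCandidates m f p) : ℝ) := sum_le_sum hc
    _ = #(S.sigma fun f => G.extensionCandidates m f p) := by rw [card_sigma]; push_cast; rfl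
    _ ≤ #(G.sparseCopies m H) := by exact_mod_cast card_le_card_of_injOn _ hmaps hinj

theorem IsTreeOrdered.card_mul_pow_le_card_sparseCopies (m : ℕ) {B c : ℝ} (hc : 0 ≤ c)
    (hB : ∀ u, (#(G.highCodegreeSet m u) : ℝ) ≤ B) :
    ∀ {n : ℕ} {H : SimpleGraph (Fin (n + 1))}, H.IsTreeOrdered →
      (∀ v, n * (1 + m + B) + c ≤ G.degree v) →
      (Fintype.card V : ℝ) * c ^ n ≤ #(G.sparseCopies m H)
  | 0, H, _, _ => by
    have : Subsingleton (Fin (0 + 1)) := Fin.subsingleton_one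
    have : G.sparseCopies m H = univ := by
      refine eq_univ_of_forall fun f =>
        mem_sparseCopies.mpr ⟨Function.injective_of_subsingleton f, ?_, ?_⟩
      · intro i j
        rw [Subsingleton.elim i j]
        exact iff_of_false (G.irrefl) (H.irrefl)
      · intro i j hij
        exact absurd (Subsingleton.elim i j) hij
    simp [this]
  | n + 1, H, hH, hdeg => by
    obtain ⟨p, hp⟩ := hH.exists_adj_last_iff
    have hdeg' : ∀ v, n * (1 + m + B) + c ≤ G.degree v := by
      intro v
      have := hdeg v
      have := hB v
      push_cast at *
      nlinarith
    calc (Fintype.card V : ℝ) * c ^ (n + 1)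
        = Fintype.card V * c ^ n * c := by ring
      _ ≤ #(G.sparseCopies m (H.comap Fin.castSucc)) * c :=
        mul_le_mul_of_nonneg_right
          (hH.comap_castSucc.card_mul_pow_le_card_sparseCopies m hc hB hdeg') hc
      _ ≤ #(G.sparseCopies m H) :=
        card_sparseCopies_comap_castSucc_mul_le hp fun f hf =>
          le_card_extensionCandidates (mem_sparseCopies.mp hf).2.2 hB (by exact_mod_cast hdeg _)

theorem IsTree.card_mul_pow_le_card_embedding {α : Type*} [Fintype α] {T : SimpleGraph α}
    (hT : T.IsTree) (m : ℕ) {B c : ℝ} (hc : 0 ≤ c)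
    (hB : ∀ u, (#(G.highCodegreeSet m u) : ℝ) ≤ B)
    (hdeg : ∀ v, Fintype.card α * (1 + m + B) + c ≤ G.degree v) :
    (Fintype.card V : ℝ) * c ^ (Fintype.card α - 1) ≤ Nat.card (T ↪g G) := by
  obtain ⟨n, e, hT'⟩ := hT.exists_isTreeOrdered
  have hα : Fintype.card α = n + 1 := by simpa using (Fintype.card_congr e).symm
  have hdeg' : ∀ v, n * (1 + m + B) + c ≤ G.degree v := by
    intro v
    have h1 := hdeg v
    have h2 := hB v
    rw [hα] at h1
    push_cast at h1
    nlinarith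
  let toEmbedding : G.sparseCopies m (T.comap e) → (T ↪g G) := fun f =>
    { toFun := f.1 ∘ e.symm
      inj' := (mem_sparseCopies.mp f.2).1.comp e.symm.injective
      map_rel_iff' := fun {a b} => by
        simpa using (mem_sparseCopies.mp f.2).2.1 (e.symm a) (e.symm b) }
  have hinj : Function.Injective toEmbedding := by
    intro f f' h
    refine Subtype.ext ?_
    simpa [toEmbedding, Function.comp_assoc] using congrArg (fun g : T ↪g G => ⇑g ∘ e) h
  have : Finite (T ↪g G) := Finite.of_injective _ DFunLike.coe_injective
  calc (Fintype.card V : ℝ) * c ^ (Fintype.card α - 1) ≤ #(G.sparseCopies m (T.comap e)) := by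
        simpa [hα] using hT'.card_mul_pow_le_card_sparseCopies m hc hB hdeg'
    _ ≤ Nat.card (T ↪g G) := by
        exact_mod_cast (Nat.card_eq_finsetCard _).symm.trans_le
          (Nat.card_le_card_of_injective _ hinj)

end SimpleGraph

namespace SimpleGraph

variable {V : Type*} [Fintype V] (G : SimpleGraph V) [DecidableRel G.Adj]

lemma ncard_neighborSet (v : V) : (G.neighborSet v).ncard = G.degree v := by
  rw [← Nat.card_coe_set_eq, Nat.card_eq_fintype_card, card_neighborSet_eq_degree]

lemma ncard_edgeSet : G.edgeSet.ncard = #G.edgeFinset := by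
  rw [← Nat.card_coe_set_eq, Nat.card_eq_fintype_card, edgeFinset_card]

variable [Nonempty V]

lemma sum_degree_eq_sum_average :
    ∑ v, (G.degree v : ℝ) = ∑ _v : V, 2 * #G.edgeFinset / (Fintype.card V : ℝ) := by
  rw [sum_const, card_univ, nsmul_eq_mul, mul_div_cancel₀ _ (by positivity)]
  exact_mod_cast G.sum_degrees_eq_twice_card_edges

lemma average_le_mul_degree {K : ℝ} (hreg : ∀ u v, (G.degree u : ℝ) ≤ K * G.degree v)
    (v : V) :
    2 * #G.edgeFinset / Fintype.card V ≤ K * G.degree v := by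
  obtain ⟨u, -, hu⟩ := exists_le_of_sum_le univ_nonempty G.sum_degree_eq_sum_average.ge
  exact hu.trans (hreg u v)

lemma degree_le_mul_average {K : ℝ} (hK : 0 ≤ K)
    (hreg : ∀ u v, (G.degree u : ℝ) ≤ K * G.degree v) (u : V) :
    G.degree u ≤ K * (2 * #G.edgeFinset / Fintype.card V) := by
  obtain ⟨v, -, hv⟩ := exists_le_of_sum_le univ_nonempty G.sum_degree_eq_sum_average.le
  exact (hreg u v).trans (mul_le_mul_of_nonneg_left hv hK)

end SimpleGraph

lemma le_of_pow_mul_cube_le {A d : ℝ} {s : ℕ} (hA : 1 ≤ A) (hs : 2 ≤ s)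
    (hd : A ^ (6 * s) * s ^ 3 ≤ d) : 2 * s * A ≤ d ∧ A * (1 + s * (A ^ 2) ^ s) ≤ d := by
  have hs' : (2 : ℝ) ≤ s := by exact_mod_cast hs
  have hss : 2 * (s : ℝ) ≤ s ^ 3 := by
    have : (4 : ℝ) ≤ s ^ 2 := by nlinarith
    nlinarith
  have hA1 : A ≤ A ^ (6 * s) := le_self_pow₀ hA (by omega)
  have hA2 : A * A ^ (2 * s) ≤ A ^ (6 * s) := by
    rw [← pow_succ']; exact pow_le_pow_right₀ hA (by omega)
  have hpow : 1 ≤ A ^ (2 * s) := one_le_pow₀ hA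
  constructor
  · nlinarith
  · rw [← pow_mul]
    nlinarith

lemma mul_one_add_floor_add_add_div_le {K t d B : ℝ} (hK : 0 < K) (ht : 0 < t) (hd : 0 ≤ d)
    (hB : 4 * K * t * (1 + B) ≤ d) :
    t * (1 + ⌊d / (4 * K * t)⌋₊ + B) + d / (2 * K) ≤ d / K := by
  have hm : t * ⌊d / (4 * K * t)⌋₊ ≤ d / (4 * K) := by
    calc t * ⌊d / (4 * K * t)⌋₊ ≤ t * (d / (4 * K * t)) := by
          gcongr; exact Nat.floor_le (by positivity)
      _ = d / (4 * K) := by field_simp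
  have hB' : t * (1 + B) ≤ d / (4 * K) := by
    rw [le_div_iff₀ (by positivity)]; linarith
  have : d / K = d / (4 * K) + d / (4 * K) + d / (2 * K) := by field_simp; ring
  linarith

theorem stmt_2 {V : Type*} [Fintype V] (G : SimpleGraph V) (s t : ℕ) (hs : 2 ≤ s)
    (K : ℝ) (hK : 1 < K) (T : SimpleGraph (Fin t)) (hT : T.IsTree)
    (hreg : ∀ u v : V, ((G.neighborSet u).ncard : ℝ) ≤ K * (G.neighborSet v).ncard)
    (hfree : KssFree s G) (d : ℝ)
    (hd : d = 2 * G.edgeSet.ncard / Fintype.card V)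
    (hd2 : (4 * K * t) ^ (6 * s) * s ^ 3 ≤ d) :
    (Fintype.card V : ℝ) * (d / (2 * K)) ^ (t - 1) ≤ Nat.card (T ↪g G) := by
  classical
  rcases isEmpty_or_nonempty V with hV | hV
  · simp
  simp only [ncard_neighborSet] at hreg
  rw [ncard_edgeSet] at hd
  have hK0 : 0 < K := by linarith
  have ht : (1 : ℝ) ≤ t := by exact_mod_cast Fin.pos_iff_nonempty.mpr hT.connected.nonempty
  have hA : 1 ≤ 4 * K * t := by nlinarith
  obtain ⟨hsA, hAB⟩ := le_of_pow_mul_cube_le hA hs hd2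
  have hd0 : 0 < d := by
    have : (0 : ℝ) < s := by exact_mod_cast (by omega : 0 < s)
    nlinarith
  have hB : ∀ u,
      (#(G.highCodegreeSet ⌊d / (4 * K * t)⌋₊ u) : ℝ) ≤ s * ((4 * K * t) ^ 2) ^ s :=
    fun u => hfree.card_highCodegreeSet_floor_div_le hK0 (by nlinarith) hd0 hsA
      (hd ▸ G.degree_le_mul_average hK0.le hreg u)
  have hdeg : ∀ v,
      (t : ℝ) * (1 + ⌊d / (4 * K * t)⌋₊ + s * ((4 * K * t) ^ 2) ^ s) + d / (2 * K) ≤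
        G.degree v := fun v =>
    (mul_one_add_floor_add_add_div_le hK0 (by linarith) hd0.le hAB).trans
      ((div_le_iff₀' hK0).mpr (hd ▸ G.average_le_mul_degree hreg v))
  simpa using hT.card_mul_pow_le_card_embedding _ (by positivity) hB (by simpa using hdeg)
end

section
/- Let G be an n-vertex K-almost-regular K_{s,s}-free graph with average degree d ≥ (4Kt)^{6s}·s³ (for some t ≥ 2, s ≥ 2, K > 1). For a vertex v, let X(v) = {u ≠ v : |N(u) ∩ N(v)| ≥ d^β} where β = 1 − 1/(3s). Then |X(v)| ≤ d^β for every vertex v. -/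
open SimpleGraph Finset

lemma kss_of_sets {V : Type*} {s : ℕ} {G : SimpleGraph V} (hfree : KssFree s G)
    (S U : Finset V) (hS : S.card = s) (hU : U.card = s) (hdisj : Disjoint S U)
    (hadj : ∀ a ∈ S, ∀ b ∈ U, G.Adj a b) : False := by
  classical
  let eS : {x // x ∈ S} ≃ Fin s := S.equivFinOfCardEq hS
  let eU : {x // x ∈ U} ≃ Fin s := U.equivFinOfCardEq hU
  let f : (Fin s) ⊕ (Fin s) → V := Sum.elim (fun i => (eS.symm i : V)) (fun i => (eU.symm i : V))
  have hmapadj : ∀ {a b : (Fin s) ⊕ (Fin s)},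
      (completeBipartiteGraph (Fin s) (Fin s)).Adj a b → G.Adj (f a) (f b) := by
    rintro (a | a) (b | b) h <;> simp at h
    · exact hadj _ (eS.symm a).2 _ (eU.symm b).2
    · exact (hadj _ (eS.symm b).2 _ (eU.symm a).2).symm
  have hinj : Function.Injective f := by
    rintro (a | a) (b | b) h <;> simp only [f, Sum.elim_inl, Sum.elim_inr] at h
    · have := Subtype.coe_injective h
      simp [eS.symm.injective this]
    · exact absurd (hdisj.forall_ne_finset (eS.symm a).2 (eU.symm b).2) (by simp [h])
    · exact absurd (hdisj.forall_ne_finset (eS.symm b).2 (eU.symm a).2) (by simp [h])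
    · have := Subtype.coe_injective h
      simp [eU.symm.injective this]
  exact hfree ⟨f, hmapadj⟩ hinj

lemma common_nbrs_lt {V : Type*} [Fintype V] [DecidableEq V] {s : ℕ} {G : SimpleGraph V}
    [DecidableRel G.Adj] (hfree : KssFree s G)
    (S : Finset V) (hS : S.card = s) :
    ({u | S ⊆ G.neighborFinset u} : Finset V).card < s := by
  by_contra h
  push_neg at h
  obtain ⟨U, hUsub, hUcard⟩ := Finset.exists_subset_card_eq h
  refine kss_of_sets hfree S U hS hUcard ?_ ?_
  · rw [Finset.disjoint_left]
    intro a haS haU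
    have : S ⊆ G.neighborFinset a := by simpa using hUsub haU
    exact G.irrefl ((G.mem_neighborFinset a a).mp (this haS))
  · intro a ha b hb
    have : S ⊆ G.neighborFinset b := by simpa using hUsub hb
    exact ((G.mem_neighborFinset b a).mp (this ha)).symm

lemma count_bound {V : Type*} [Fintype V] [DecidableEq V] {s : ℕ} (hs : 1 ≤ s)
    {G : SimpleGraph V} [DecidableRel G.Adj] (hfree : KssFree s G) (v : V)
    (Xf : Finset V) (b : ℕ)
    (hb : ∀ u ∈ Xf, b ≤ (G.neighborFinset u ∩ G.neighborFinset v).card) :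
    Xf.card * b.choose s ≤ (G.degree v).choose s * (s - 1) := by
  set Nv := G.neighborFinset v with hNv
  set T := Nv.powersetCard s with hT
  calc Xf.card * b.choose s = ∑ u ∈ Xf, b.choose s := by
        rw [Finset.sum_const, smul_eq_mul]
    _ ≤ ∑ u ∈ Xf, ((G.neighborFinset u ∩ Nv).card).choose s := by
        exact Finset.sum_le_sum fun u hu => Nat.choose_le_choose s (hb u hu)
    _ = ∑ u ∈ Xf, ((G.neighborFinset u ∩ Nv).powersetCard s).card := by
        simp [Finset.card_powersetCard]
    _ = ∑ u ∈ Xf, (T.filter (fun S => S ⊆ G.neighborFinset u)).card := by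
        refine Finset.sum_congr rfl fun u _ => ?_
        congr 1
        ext S
        simp only [hT, Finset.mem_powersetCard, Finset.mem_filter, Finset.subset_inter_iff]
        tauto
    _ = ∑ u ∈ Xf, ∑ S ∈ T, if S ⊆ G.neighborFinset u then 1 else 0 :=
        Finset.sum_congr rfl fun u _ => Finset.card_filter _ _
    _ = ∑ S ∈ T, ∑ u ∈ Xf, if S ⊆ G.neighborFinset u then 1 else 0 := Finset.sum_comm
    _ = ∑ S ∈ T, (Xf.filter (fun u => S ⊆ G.neighborFinset u)).card :=
        Finset.sum_congr rfl fun S _ => (Finset.card_filter _ _).symm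
    _ ≤ ∑ S ∈ T, (s - 1) := by
        refine Finset.sum_le_sum fun S hS => ?_
        have h1 : (Xf.filter (fun u => S ⊆ G.neighborFinset u)).card ≤
            ({u | S ⊆ G.neighborFinset u} : Finset V).card := by
          apply Finset.card_le_card
          intro u hu
          simp only [Finset.mem_filter] at hu ⊢
          exact ⟨Finset.mem_univ u, hu.2⟩
        have h2 := common_nbrs_lt hfree S (Finset.mem_powersetCard.mp hS).2
        omega
    _ = T.card * (s - 1) := by rw [Finset.sum_const, smul_eq_mul]
    _ = (G.degree v).choose s * (s - 1) := by
        rw [hT, Finset.card_powersetCard, hNv, G.card_neighborFinset_eq_degree]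

set_option maxHeartbeats 1600000 in
theorem stmt_3 {V : Type*} [Fintype V] (G : SimpleGraph V) (s t : ℕ)
    (hs : 2 ≤ s) (ht : 2 ≤ t) (K : ℝ) (hK : 1 < K)
    (hreg : ∀ u v : V, ((G.neighborSet u).ncard : ℝ) ≤ K * (G.neighborSet v).ncard)
    (hfree : KssFree s G) (d β : ℝ)
    (hd : d = 2 * G.edgeSet.ncard / Fintype.card V)
    (hβ : β = 1 - 1 / (3 * s))
    (hd2 : (4 * K * t) ^ (6 * s) * s ^ 3 ≤ d) (v : V) :
    (({u : V | u ≠ v ∧ d ^ β ≤ ((G.neighborSet u ∩ G.neighborSet v).ncard : ℝ)}.ncard : ℝ)) ≤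
      d ^ β := by
  classical
  -- basic positivity facts
  have hK0 : (0:ℝ) < K := lt_trans one_pos hK
  have hsR : (2:ℝ) ≤ (s:ℝ) := by exact_mod_cast hs
  have htR : (2:ℝ) ≤ (t:ℝ) := by exact_mod_cast ht
  have hKt : (8:ℝ) ≤ 4*K*t := by nlinarith
  have hKt1 : (1:ℝ) ≤ 4*K*t := by linarith
  have hKtp : (8:ℝ) ≤ (4*K*t)^(6*s) := le_trans hKt (le_self_pow₀ hKt1 (by omega))
  have hs3 : (8:ℝ) ≤ (s:ℝ)^3 := by
    calc (8:ℝ) = 2^3 := by norm_num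
      _ ≤ (s:ℝ)^3 := pow_le_pow_left₀ (by norm_num) hsR 3
  have hD0 : (1:ℝ) ≤ (4*K*t)^(6*s) * (s:ℝ)^3 := by
    have h := mul_le_mul hKtp hs3 (by norm_num) (by linarith)
    linarith
  have hd1 : (1:ℝ) ≤ d := le_trans hD0 hd2
  have hd0 : (0:ℝ) < d := lt_of_lt_of_le one_pos hd1
  have hsR0 : (0:ℝ) < (s:ℝ) := by linarith
  have hinv : 1/(3*(s:ℝ)) ≤ 1/6 := by
    apply one_div_le_one_div_of_le (by norm_num)
    linarith
  have hinv0 : 0 < 1/(3*(s:ℝ)) := by positivity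
  have hβhalf : (1/2:ℝ) ≤ β := by rw [hβ]; linarith
  have hβ1 : β ≤ 1 := by rw [hβ]; linarith
  have hxpos : (0:ℝ) < d^β := Real.rpow_pos_of_pos hd0 β
  -- 2s ≤ d^β
  have hd4s : 4*(s:ℝ)^2 ≤ d := by
    have h1 : 4*(s:ℝ)^2 ≤ 2*(s:ℝ)^3 := by nlinarith [sq_nonneg (s:ℝ)]
    have h2 : (0:ℝ) ≤ ((4*K*t)^(6*s) - 2) * (s:ℝ)^3 :=
      mul_nonneg (by linarith) (by linarith)
    nlinarith
  have h2s : 2*(s:ℝ) ≤ d^β := by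
    have h1 : ((2*(s:ℝ))^(2:ℕ))^((1:ℝ)/2) ≤ d^((1:ℝ)/2) :=
      Real.rpow_le_rpow (by positivity) (by nlinarith) (by norm_num)
    rw [← Real.rpow_natCast (2*(s:ℝ)) 2, ← Real.rpow_mul (by positivity)] at h1
    norm_num at h1
    calc 2*(s:ℝ) ≤ d^((1:ℝ)/2) := h1
      _ ≤ d^β := Real.rpow_le_rpow_of_exponent_le hd1 hβhalf
  -- counting setup
  set X : Set V := {u : V | u ≠ v ∧ d ^ β ≤ ((G.neighborSet u ∩ G.neighborSet v).ncard : ℝ)} with hX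
  have hXcard : X.ncard = X.toFinset.card := Set.ncard_eq_toFinset_card' X
  set Xf : Finset V := X.toFinset with hXf
  set m : ℕ := Xf.card with hm
  set b : ℕ := ⌈d^β⌉₊ with hbdef
  have hxb : d^β ≤ (b:ℝ) := Nat.le_ceil _
  have h2sb : 2*s ≤ b := by exact_mod_cast le_trans h2s hxb
  have hb : ∀ u ∈ Xf, b ≤ (G.neighborFinset u ∩ G.neighborFinset v).card := by
    intro u hu
    rw [hXf, Set.mem_toFinset] at hu
    have h1 : d^β ≤ ((G.neighborSet u ∩ G.neighborSet v).ncard : ℝ) := hu.2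
    have h2 : (G.neighborSet u ∩ G.neighborSet v).ncard =
        (G.neighborFinset u ∩ G.neighborFinset v).card := by
      rw [show G.neighborSet u ∩ G.neighborSet v =
          ↑(G.neighborFinset u ∩ G.neighborFinset v) by
        simp [SimpleGraph.neighborFinset_def, Set.coe_toFinset]]
      exact Set.ncard_coe_finset _
    rw [h2] at h1
    rw [hbdef]
    exact Nat.ceil_le.mpr h1
  have hcount := count_bound (by omega) hfree v Xf b hb
  -- nat inequality
  set Dv : ℕ := G.degree v with hDv
  have hnat : m * (b+1-s)^s ≤ (s-1) * Dv^s := by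
    calc m * (b+1-s)^s ≤ m * b.descFactorial s :=
          Nat.mul_le_mul_left m (Nat.pow_sub_le_descFactorial b s)
      _ = m * (s.factorial * b.choose s) := by rw [Nat.descFactorial_eq_factorial_mul_choose]
      _ = s.factorial * (m * b.choose s) := by ring
      _ ≤ s.factorial * (Dv.choose s * (s-1)) := Nat.mul_le_mul_left _ hcount
      _ = (s-1) * (s.factorial * Dv.choose s) := by ring
      _ = (s-1) * Dv.descFactorial s := by rw [Nat.descFactorial_eq_factorial_mul_choose]
      _ ≤ (s-1) * Dv^s := Nat.mul_le_mul_left _ (Nat.descFactorial_le_pow Dv s)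
  -- degree bound: Dv ≤ K * d
  have hn0 : 0 < Fintype.card V := Fintype.card_pos_iff.mpr ⟨v⟩
  have hnR : (0:ℝ) < (Fintype.card V : ℝ) := by exact_mod_cast hn0
  have hDvKd : (Dv:ℝ) ≤ K * d := by
    obtain ⟨u₀, -, hu₀⟩ := Finset.exists_min_image Finset.univ (fun w => G.degree w)
      ⟨v, Finset.mem_univ v⟩
    have hmin : Fintype.card V * G.degree u₀ ≤ 2 * G.edgeFinset.card := by
      rw [← G.sum_degrees_eq_twice_card_edges]
      calc Fintype.card V * G.degree u₀ = ∑ _u : V, G.degree u₀ := by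
            rw [Finset.sum_const, Finset.card_univ, smul_eq_mul]
        _ ≤ ∑ u, G.degree u := Finset.sum_le_sum fun x _ => hu₀ x (Finset.mem_univ x)
    have hedge : G.edgeSet.ncard = G.edgeFinset.card := by
      rw [SimpleGraph.edgeFinset_card, Set.ncard_eq_toFinset_card', Set.toFinset_card]
    have hdn : d * Fintype.card V = 2 * G.edgeFinset.card := by
      rw [hd, hedge]
      field_simp
    have hu0d : (G.degree u₀ : ℝ) ≤ d := by
      have h1 : (Fintype.card V : ℝ) * G.degree u₀ ≤ d * Fintype.card V := by
        rw [hdn]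
        exact_mod_cast hmin
      rw [mul_comm] at h1
      exact le_of_mul_le_mul_right h1 hnR
    have h3 : ∀ w, (G.neighborSet w).ncard = G.degree w := by
      intro w
      rw [← SimpleGraph.card_neighborSet_eq_degree, Set.ncard_eq_toFinset_card',
        Set.toFinset_card]
    have h2 : ((G.neighborSet v).ncard : ℝ) ≤ K * (G.neighborSet u₀).ncard := hreg v u₀
    rw [h3, h3] at h2
    calc (Dv:ℝ) ≤ K * G.degree u₀ := h2
      _ ≤ K * d := mul_le_mul_of_nonneg_left hu0d hK0.le
  -- cast nat inequality to ℝ and bound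
  have hsb1 : s ≤ b + 1 := by omega
  have hPval : ((b+1-s : ℕ):ℝ) = (b:ℝ) + 1 - s := by
    push_cast [Nat.cast_sub hsb1]
    ring
  have hPlow : d^β/2 ≤ ((b+1-s : ℕ):ℝ) := by
    rw [hPval]
    linarith
  have hreal : (m:ℝ) * ((b+1-s:ℕ):ℝ)^s ≤ ((s:ℝ)-1) * (Dv:ℝ)^s := by
    have := hnat
    have h1 : ((m * (b+1-s)^s : ℕ) : ℝ) ≤ (((s-1) * Dv^s : ℕ) : ℝ) := by exact_mod_cast this
    push_cast at h1
    rw [Nat.cast_sub (by omega : 1 ≤ s)] at h1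
    push_cast at h1
    convert h1 using 2
  -- KEY inequality: s * (2K)^s ≤ d^(β - 1/3)
  have he0 : (0:ℝ) ≤ β - 1/3 := by linarith
  have hKEY : (s:ℝ) * (2*K)^s ≤ d^(β-1/3) := by
    have hstep1 : ((4*K*t)^(6*s) * (s:ℝ)^3)^(β-1/3) ≤ d^(β-1/3) :=
      Real.rpow_le_rpow (by positivity) hd2 he0
    have hsplit : ((4*K*t)^(6*s) * (s:ℝ)^3)^(β-1/3)
        = (4*K*t)^(4*(s:ℝ)-2) * (s:ℝ)^((2:ℝ)-1/(s:ℝ)) := by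
      rw [Real.mul_rpow (by positivity) (by positivity),
        ← Real.rpow_natCast (4*K*t) (6*s), ← Real.rpow_natCast ((s:ℝ)) 3,
        ← Real.rpow_mul (by positivity), ← Real.rpow_mul (by positivity)]
      congr 1
      · congr 1
        push_cast
        rw [hβ]
        field_simp
        ring
      · congr 1
        push_cast
        rw [hβ]
        field_simp
        ring
    have ha : (s:ℝ) ≤ (s:ℝ)^((2:ℝ)-1/(s:ℝ)) := by
      have h1 : (1:ℝ)/(s:ℝ) ≤ 1 := by
        rw [div_le_one hsR0]; linarith
      have h2 : (s:ℝ)^(1:ℝ) ≤ (s:ℝ)^((2:ℝ)-1/(s:ℝ)) :=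
        Real.rpow_le_rpow_of_exponent_le (by linarith) (by linarith)
      rwa [Real.rpow_one] at h2
    have hb2 : (2*K)^s ≤ (4*K*t)^(4*(s:ℝ)-2) := by
      calc (2*K)^s ≤ (4*K*t)^s := pow_le_pow_left₀ (by linarith) (by nlinarith) s
        _ = (4*K*t)^((s:ℕ):ℝ) := (Real.rpow_natCast _ s).symm
        _ ≤ (4*K*t)^(4*(s:ℝ)-2) := Real.rpow_le_rpow_of_exponent_le hKt1 (by push_cast; linarith)
    calc (s:ℝ)*(2*K)^s = (2*K)^s * (s:ℝ) := mul_comm _ _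
      _ ≤ (4*K*t)^(4*(s:ℝ)-2) * (s:ℝ)^((2:ℝ)-1/(s:ℝ)) :=
          mul_le_mul hb2 ha (by linarith) (by positivity)
      _ ≤ d^(β-1/3) := by rw [← hsplit]; exact hstep1
  -- big inequality
  have hbig : (s:ℝ)*(K*d)^s ≤ d^β * (d^β/2)^s := by
    have h1 : d^β * (d^β/2)^s = d^(β-1/3) * d^((s:ℕ):ℝ) / 2^s := by
      calc d^β * (d^β/2)^s = d^β * (d^(β*((s:ℕ):ℝ)) / 2^s) := by
            rw [div_pow, ← Real.rpow_natCast (d^β) s, ← Real.rpow_mul hd0.le]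
        _ = d^β * d^(β*((s:ℕ):ℝ)) / 2^s := by ring
        _ = d^(β + β*((s:ℕ):ℝ)) / 2^s := by rw [← Real.rpow_add hd0]
        _ = d^((β-1/3) + ((s:ℕ):ℝ)) / 2^s := by
            rw [show β + β*((s:ℕ):ℝ) = (β-1/3) + ((s:ℕ):ℝ) by
              push_cast; rw [hβ]; field_simp; ring]
        _ = d^(β-1/3) * d^((s:ℕ):ℝ) / 2^s := by rw [Real.rpow_add hd0]
    rw [h1, le_div_iff₀ (by positivity : (0:ℝ) < (2:ℝ)^s)]
    calc (s:ℝ)*(K*d)^s * 2^s = ((s:ℝ)*(2*K)^s) * d^((s:ℕ):ℝ) := by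
          rw [Real.rpow_natCast, mul_pow, mul_pow]; ring
      _ ≤ d^(β-1/3) * d^((s:ℕ):ℝ) :=
          mul_le_mul_of_nonneg_right hKEY (Real.rpow_nonneg hd0.le _)
  -- chain
  have hchain : (m:ℝ) * (d^β/2)^s ≤ d^β * (d^β/2)^s := by
    have hDK : (Dv:ℝ)^s ≤ (K*d)^s := pow_le_pow_left₀ (Nat.cast_nonneg Dv) hDvKd s
    calc (m:ℝ)*(d^β/2)^s ≤ (m:ℝ)*((b+1-s:ℕ):ℝ)^s :=
          mul_le_mul_of_nonneg_left (pow_le_pow_left₀ (by positivity) hPlow s)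
            (Nat.cast_nonneg m)
      _ ≤ ((s:ℝ)-1)*(Dv:ℝ)^s := hreal
      _ ≤ ((s:ℝ)-1)*(K*d)^s := mul_le_mul_of_nonneg_left hDK (by linarith)
      _ ≤ (s:ℝ)*(K*d)^s := mul_le_mul_of_nonneg_right (by linarith) (by positivity)
      _ ≤ d^β*(d^β/2)^s := hbig
  have hfin : (m:ℝ) ≤ d^β := le_of_mul_le_mul_right hchain (by positivity)
  rw [hXcard]
  exact_mod_cast hfin
end

section
/- Let H be a connected bipartite graph on h ≥ 3 vertices such that ex(n, H) = Ω(n^{1+α}) for some α ∈ (0,1). Then for all n ≥ s ≥ h, there exists an n-vertex graph G that is K_{s,s}-free, contains no induced copy of H, and satisfies e(G) = Ω_h(s^{1−α}·n^{1+α}). -/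
open SimpleGraph

/-!
Blow up an extremal `H`-free graph `G₀` on about `n / t` vertices, `t` a small multiple of `s / h`,
replacing each vertex by a clique of about `t` vertices. A copy of `K_{s,s}` meets at least `2h`
cliques on each side, so `h` cliques on each side, all distinct, span a `K_{h,h} ⊇ H` in `G₀`. An
induced copy of `H` meeting some clique twice contains two adjacent twins; by connectivity a third
vertex is adjacent to one, hence to both, of them: a triangle in the bipartite `H`. Otherwise the
copy projects to a copy of `H` in `G₀`. The blow-up has at least
`t² e(G₀) ≳ t² (n / t)^(1+α) ≈ s^(1-α) n^(1+α)` edges, up to factors depending on `h`.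
-/

open Finset

namespace SimpleGraph

variable {U V W : Type*}

lemma free_iff_forall_not_injective {A : SimpleGraph U} {B : SimpleGraph V} :
    A.Free B ↔ ∀ f : A →g B, ¬ Function.Injective f :=
  ⟨fun h f hf => h ⟨f.toCopy hf⟩, fun h ⟨f⟩ => h f.toHom f.injective⟩

lemma Colorable.isContained_completeBipartiteGraph {H : SimpleGraph U} (hH : H.Colorable 2) :
    H ⊑ completeBipartiteGraph U U := by
  obtain ⟨C⟩ := hH
  let f : U → U ⊕ U := fun u => if C u = 0 then .inl u else .inr u
  refine ⟨⟨⟨f, fun {u v} huv => ?_⟩, fun u v huv => ?_⟩⟩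
  · have := C.valid huv
    by_cases hu : C u = 0 <;> by_cases hv : C v = 0 <;> simp [f, hu, hv] at this ⊢
    omega
  · by_cases hu : C u = 0 <;> by_cases hv : C v = 0 <;> simp_all [f]

lemma completeBipartiteGraph_fin_isContained {h s : ℕ} (hhs : h ≤ s) :
    completeBipartiteGraph (Fin h) (Fin h) ⊑ completeBipartiteGraph (Fin s) (Fin s) :=
  ⟨⟨⟨Sum.map (Fin.castLE hhs) (Fin.castLE hhs), by rintro (u | u) (v | v) <;> simp⟩,
    (Fin.castLE_injective hhs).sumMap (Fin.castLE_injective hhs)⟩⟩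

lemma Colorable.free_completeBipartiteGraph {V : Type*} {h : ℕ}
    {H : SimpleGraph (Fin h)} {G : SimpleGraph V} (hH : H.Colorable 2) (hfree : H.Free G) :
    (completeBipartiteGraph (Fin h) (Fin h)).Free G :=
  fun hK => hfree (hH.isContained_completeBipartiteGraph.trans hK)

def blowup (G₀ : SimpleGraph W) (π : V → W) : SimpleGraph V where
  Adj u v := u ≠ v ∧ (π u = π v ∨ G₀.Adj (π u) (π v))
  symm := ⟨fun _ _ h => ⟨h.1.symm, h.2.imp Eq.symm G₀.adj_symm⟩⟩
  loopless := ⟨fun _ h => h.1 rfl⟩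

variable {G₀ : SimpleGraph W} {π : V → W}

@[simp] lemma blowup_adj {u v : V} :
    (G₀.blowup π).Adj u v ↔ u ≠ v ∧ (π u = π v ∨ G₀.Adj (π u) (π v)) := Iff.rfl

lemma blowup_adj_congr_left {u v w : V} (huv : π u = π v) (huw : u ≠ w) (hvw : v ≠ w) :
    (G₀.blowup π).Adj u w ↔ (G₀.blowup π).Adj v w := by
  simp [huv, huw, hvw]

lemma isContained_of_injective_comp_blowup {H : SimpleGraph U} (f : H →g G₀.blowup π)
    (hf : Function.Injective (π ∘ f)) : H ⊑ G₀ :=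
  ⟨⟨⟨π ∘ f, fun huv => ((f.map_adj huv).2.resolve_left (hf.ne (H.ne_of_adj huv)))⟩, hf⟩⟩

lemma mul_self_mul_ncard_edgeSet_le_ncard_edgeSet_blowup [Fintype V] [Fintype W] [DecidableEq W]
    {t : ℕ} (hπ : ∀ w, t ≤ #{v | π v = w}) :
    t * t * G₀.edgeSet.ncard ≤ (G₀.blowup π).edgeSet.ncard := by
  classical
  have hσ : ∀ w, ∃ σ : Fin t → V, Function.Injective σ ∧ ∀ i, π (σ i) = w := fun w => by
    obtain ⟨σ⟩ := Function.Embedding.nonempty_of_card_le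
      (α := Fin t) (β := {v // π v = w}) (by simpa [Fintype.card_subtype] using hπ w)
    exact ⟨(↑) ∘ σ, Subtype.val_injective.comp σ.injective, fun i => (σ i).2⟩
  choose σ hσinj hπσ using hσ
  let φ : Fin t × Fin t × G₀.Dart → (G₀.blowup π).Dart := fun ⟨i, j, d⟩ =>
    ⟨(σ d.fst i, σ d.snd j), by
      have hadj : G₀.Adj (π (σ d.fst i)) (π (σ d.snd j)) := by simp [hπσ]
      exact ⟨fun h => G₀.ne_of_adj hadj (congrArg π h), .inr hadj⟩⟩
  have hφ : Function.Injective φ := by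
    rintro ⟨i, j, d⟩ ⟨i', j', d'⟩ h
    simp only [φ, Dart.ext_iff, Prod.ext_iff] at h
    obtain rfl : d = d' := Dart.ext _ _ (Prod.ext
      (by simpa [hπσ] using congrArg π h.1) (by simpa [hπσ] using congrArg π h.2))
    simp [(hσinj _).eq_iff.mp h.1, (hσinj _).eq_iff.mp h.2]
  have := Fintype.card_le_of_injective φ hφ
  simp only [Fintype.card_prod, Fintype.card_fin, dart_card_eq_twice_card_edges] at this
  rw [← coe_edgeFinset, ← coe_edgeFinset, Set.ncard_coe_finset, Set.ncard_coe_finset]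
  nlinarith

lemma free_blowup_completeBipartiteGraph [Fintype V] [DecidableEq W] {h k s : ℕ}
    (hG₀ : (completeBipartiteGraph (Fin h) (Fin h)).Free G₀) (hk : 0 < k)
    (hπ : ∀ w, #{v | π v = w} ≤ k) (hs : 2 * h * k ≤ s) :
    (completeBipartiteGraph (Fin s) (Fin s)).Free (G₀.blowup π) := by
  intro hK
  obtain ⟨A, B, hA, hB, hAB⟩ := completeBipartiteGraph_isContained_iff.mp hK
  have hblobs : ∀ S : Finset V, #S = s → 2 * h ≤ #(S.image π) := fun S hS => by
    have := S.card_le_mul_card_image k fun w _ =>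
      (card_le_card (filter_subset_filter _ (subset_univ S))).trans (hπ w)
    exact Nat.le_of_mul_le_mul_left (by nlinarith) hk
  have hA' := hblobs A (by simpa using hA)
  have hB' := hblobs B (by simpa using hB)
  obtain ⟨P, hPA, hP⟩ := exists_subset_card_eq (show h ≤ #(A.image π) by omega)
  obtain ⟨Q, hQB, hQ⟩ := exists_subset_card_eq (show h ≤ #(B.image π \ P) by
    have := le_card_sdiff P (B.image π); omega)
  refine hG₀ (completeBipartiteGraph_isContained_iff.mpr
    ⟨P, Q, by simpa using hP, by simpa using hQ, fun p hp q hq => ?_⟩)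
  obtain ⟨a, ha, rfl⟩ := mem_image.mp (hPA hp)
  obtain ⟨hqB, hqP⟩ := mem_sdiff.mp (hQB hq)
  obtain ⟨b, hb, rfl⟩ := mem_image.mp hqB
  exact (hAB ha hb).2.resolve_left fun hab => hqP (hab ▸ hp)

lemma Connected.exists_adj_of_ne {H : SimpleGraph U} (hH : H.Connected) {u v z : U}
    (hzu : z ≠ u) (hzv : z ≠ v) : ∃ w, w ≠ u ∧ w ≠ v ∧ (H.Adj u w ∨ H.Adj v w) := by
  obtain ⟨d, -, hd, hd'⟩ := (hH.preconnected u z).some.exists_boundary_dart {u, v} (by simp)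
    (by simp [hzu, hzv])
  simp only [Set.mem_insert_iff, Set.mem_singleton_iff, not_or] at hd hd'
  rcases hd with h | h
  exacts [⟨d.snd, hd'.1, hd'.2, .inl (h ▸ d.adj)⟩, ⟨d.snd, hd'.1, hd'.2, .inr (h ▸ d.adj)⟩]

lemma isEmpty_embedding_blowup [Fintype U] [DecidableEq U] {H : SimpleGraph U} (hH : H.Connected)
    (hbip : H.Colorable 2) (hU : 3 ≤ Fintype.card U) (hfree : H.Free G₀) :
    IsEmpty (H ↪g G₀.blowup π) := by
  refine ⟨fun e => ?_⟩
  by_cases hinj : Function.Injective (π ∘ e)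
  · exact hfree (isContained_of_injective_comp_blowup e.toHom hinj)
  obtain ⟨u, v, huv, hne⟩ := Function.not_injective_iff.mp hinj
  have hadj : H.Adj u v := e.map_adj_iff.mp ⟨e.injective.ne hne, .inl huv⟩
  obtain ⟨z, -, hz⟩ := exists_mem_notMem_of_card_lt_card (s := {u, v}) (t := univ)
    (card_le_two.trans_lt (by rw [card_univ]; omega))
  simp only [mem_insert, mem_singleton, not_or] at hz
  obtain ⟨w, hwu, hwv, hw⟩ := hH.exists_adj_of_ne hz.1 hz.2
  have hcongr : H.Adj u w ↔ H.Adj v w := by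
    rw [← e.map_adj_iff, ← e.map_adj_iff]
    exact blowup_adj_congr_left huv (e.injective.ne hwu.symm) (e.injective.ne hwv.symm)
  refine hbip.cliqueFree (by norm_num : 2 < 3) {u, v, w} (is3Clique_triple_iff.mpr ⟨hadj, ?_⟩)
  rcases hw with hw | hw
  exacts [⟨hw, hcongr.mp hw⟩, ⟨hcongr.mpr hw, hw⟩]

end SimpleGraph

-- consecutive blocks of `t` vertices, the last block absorbing the remainder `n % t`
lemma Fin.exists_fiber_card_between {n t : ℕ} (ht : 0 < t) (htn : t ≤ n) :
    ∃ π : Fin n → Fin (n / t), ∀ p, t ≤ #{i | π i = p} ∧ #{i | π i = p} ≤ 2 * t := by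
  have hm : 0 < n / t := Nat.div_pos htn ht
  have hmt : n / t * t ≤ n := Nat.div_mul_le_self n t
  have hnt : n < (n / t + 1) * t := by nlinarith [Nat.lt_mul_div_succ n ht]
  refine ⟨fun i => ⟨min (i / t) (n / t - 1), by omega⟩, fun p => ⟨?_, ?_⟩⟩
  · have hblock : ∀ j : Fin t, p * t + j < n := fun j => by nlinarith [j.2, p.2]
    calc t = #(univ : Finset (Fin t)) := by simp
      _ ≤ _ := card_le_card_of_injOn (fun j => ⟨p * t + j, hblock j⟩)
          (fun j _ => by
            have : (p * t + j) / t = p := by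
              rw [add_comm, Nat.add_mul_div_right _ _ ht, Nat.div_eq_of_lt j.2, zero_add]
            simp only [coe_filter, mem_univ, true_and, Set.mem_ofPred_eq, Fin.ext_iff, this]
            omega)
          (fun j _ j' _ h => by simpa [Fin.ext_iff] using h)
  · calc _ ≤ #(Ico (p * t) (p * t + 2 * t)) :=
          card_le_card_of_injOn Fin.val (fun i hi => by
            simp only [coe_filter, mem_univ, true_and, Set.mem_ofPred_eq, Fin.ext_iff] at hi
            have hlow : p * t ≤ i :=
              (Nat.mul_le_mul_right t (hi ▸ min_le_left _ _)).trans (Nat.div_mul_le_self i t)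
            have hlast : (n / t - 1 + 2) * t = (n / t + 1) * t := by congr 1; omega
            have := Nat.lt_mul_div_succ i ht
            simp only [coe_Ico, Set.mem_Ico]
            refine ⟨hlow, ?_⟩
            rcases min_choice (i / t) (n / t - 1) with h | h <;> rw [h] at hi <;> rw [← hi] <;>
              nlinarith [i.2])
          Fin.val_injective.injOn
      _ = 2 * t := by simp

lemma div_mul_rpow_one_sub_mul_rpow_one_add_le {α c K s n t m E : ℝ} (hα₀ : 0 ≤ α) (hα₁ : α ≤ 1)
    (hc : 0 ≤ c) (hK : 1 ≤ K) (hs₀ : 0 ≤ s) (hn₀ : 0 ≤ n) (ht : 0 < t) (hm : 0 ≤ m)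
    (hs : s ≤ K * t) (hn : n ≤ 2 * t * m) (hE : t ^ 2 * (c * m ^ (1 + α)) ≤ E) :
    c / (4 * K) * s ^ (1 - α) * n ^ (1 + α) ≤ E := by
  have hs' : s ^ (1 - α) ≤ K * t ^ (1 - α) := calc
    s ^ (1 - α) ≤ (K * t) ^ (1 - α) := by gcongr
    _ = K ^ (1 - α) * t ^ (1 - α) := Real.mul_rpow (by linarith) ht.le
    _ ≤ K * t ^ (1 - α) := by
      gcongr
      exact Real.rpow_le_self_of_one_le hK (by linarith)
  have hn' : n ^ (1 + α) ≤ 4 * (t ^ (1 + α) * m ^ (1 + α)) := calc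
    n ^ (1 + α) ≤ (2 * t * m) ^ (1 + α) := by gcongr
    _ = 2 ^ (1 + α) * (t ^ (1 + α) * m ^ (1 + α)) := by
      rw [Real.mul_rpow (by positivity) hm, Real.mul_rpow (by norm_num) ht.le, mul_assoc]
    _ ≤ 4 * (t ^ (1 + α) * m ^ (1 + α)) := by
      gcongr
      calc (2 : ℝ) ^ (1 + α) ≤ 2 ^ (2 : ℝ) := by gcongr <;> linarith
        _ = 4 := by norm_num
  have ht2 : t ^ (1 - α) * t ^ (1 + α) = t ^ 2 := by
    rw [← Real.rpow_add ht]; norm_num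
  calc c / (4 * K) * s ^ (1 - α) * n ^ (1 + α)
      ≤ c / (4 * K) * (K * t ^ (1 - α)) * (4 * (t ^ (1 + α) * m ^ (1 + α))) := by gcongr
    _ = t ^ 2 * (c * m ^ (1 + α)) := by
      rw [← ht2]; field_simp
    _ ≤ E := hE

lemma kssFree_iff_free {V : Type*} {s : ℕ} {G : SimpleGraph V} :
    KssFree s G ↔ (completeBipartiteGraph (Fin s) (Fin s)).Free G :=
  free_iff_forall_not_injective.symm

lemma kssFree_of_free {V : Type*} {h s : ℕ} {H : SimpleGraph (Fin h)} {G : SimpleGraph V}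
    (hbip : H.Colorable 2) (hhs : h ≤ s) (hfree : H.Free G) : KssFree s G :=
  kssFree_iff_free.mpr fun hK =>
    hbip.free_completeBipartiteGraph hfree ((completeBipartiteGraph_fin_isContained hhs).trans hK)

lemma exists_kssFree_blowup {h n s t : ℕ} {H : SimpleGraph (Fin h)} (hh : 3 ≤ h)
    (hconn : H.Connected) (hbip : H.Colorable 2) {G₀ : SimpleGraph (Fin (n / t))}
    (hfree : H.Free G₀) (ht : 0 < t) (htn : t ≤ n) (hts : 4 * h * t ≤ s) :
    ∃ G : SimpleGraph (Fin n), KssFree s G ∧ IsEmpty (H ↪g G) ∧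
      t * t * G₀.edgeSet.ncard ≤ G.edgeSet.ncard := by
  obtain ⟨π, hπ⟩ := Fin.exists_fiber_card_between ht htn
  refine ⟨G₀.blowup π, kssFree_iff_free.mpr ?_,
    isEmpty_embedding_blowup hconn hbip (by simpa) hfree,
    mul_self_mul_ncard_edgeSet_le_ncard_edgeSet_blowup fun p => (hπ p).1⟩
  exact free_blowup_completeBipartiteGraph (hbip.free_completeBipartiteGraph hfree) (by omega)
    (fun p => (hπ p).2) (by linarith)

theorem stmt_5 (h : ℕ) (hh : 3 ≤ h) (H : SimpleGraph (Fin h))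
    (hconn : H.Connected) (hbip : H.Colorable 2) (α : ℝ) (hα : α ∈ Set.Ioo (0 : ℝ) 1)
    (hlow : ∃ c : ℝ, 0 < c ∧ ∃ n₀ : ℕ, ∀ n ≥ n₀, ∃ G : SimpleGraph (Fin n),
      (∀ f : H →g G, ¬ Function.Injective f) ∧ c * (n : ℝ) ^ (1 + α) ≤ G.edgeSet.ncard) :
    ∃ c' : ℝ, 0 < c' ∧ ∃ n₀ : ℕ, ∀ n ≥ n₀, ∀ s : ℕ, h ≤ s → s ≤ n →
      ∃ G : SimpleGraph (Fin n), KssFree s G ∧ IsEmpty (H ↪g G) ∧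
        c' * (s : ℝ) ^ (1 - α) * (n : ℝ) ^ (1 + α) ≤ G.edgeSet.ncard := by
  obtain ⟨c, hc, n₀, hlow⟩ := hlow
  set N := max n₀ 1
  set L := 4 * h * N
  have hN : 1 ≤ N := le_max_right _ _
  have hL : 4 * h ≤ L := Nat.le_mul_of_pos_right _ hN
  refine ⟨c / (4 * (2 * L)), by positivity, N, fun n hn s hhs hsn => ?_⟩
  -- for bounded `s` the extremal graph itself will do
  rcases lt_or_ge s L with hsL | hsL
  · obtain ⟨G, hG, hE⟩ := hlow n (le_of_max_le_left hn)
    have hfree := free_iff_forall_not_injective.mpr hG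
    refine ⟨G, kssFree_of_free hbip hhs hfree, ⟨fun e => hfree e.isContained⟩, ?_⟩
    exact div_mul_rpow_one_sub_mul_rpow_one_add_le (t := 1) (m := n) hα.1.le hα.2.le hc.le
      (by norm_cast; omega) (by positivity) (by positivity) one_pos (by positivity)
      (by norm_cast; omega) (by linarith) (by simpa using hE)
  set t := s / L
  have ht : 0 < t := Nat.div_pos hsL (by omega)
  have hLt : L * t ≤ s := Nat.mul_div_le s L
  have hNt : N * t ≤ n := (Nat.mul_le_mul_right t (Nat.le_mul_of_pos_left N (by omega))).trans
    (hLt.trans hsn)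
  obtain ⟨G₀, hG₀, hE⟩ :=
    hlow (n / t) ((le_max_left _ _).trans ((Nat.le_div_iff_mul_le ht).mpr hNt))
  obtain ⟨G, hK, hind, hblowup⟩ := exists_kssFree_blowup (s := s) hh hconn hbip
    (free_iff_forall_not_injective.mpr hG₀) ht (by nlinarith)
    ((Nat.mul_le_mul_right t hL).trans hLt)
  refine ⟨G, hK, hind, div_mul_rpow_one_sub_mul_rpow_one_add_le (t := t) (m := ↑(n / t))
    hα.1.le hα.2.le hc.le (by norm_cast; omega) (by positivity) (by positivity) (by positivity)
    (by positivity) ?_ ?_ ?_⟩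
  · have : s < L * (t + 1) := Nat.lt_mul_div_succ s (by omega)
    norm_cast; nlinarith
  · have : n < t * (n / t + 1) := Nat.lt_mul_div_succ n ht
    have : 1 ≤ n / t := (Nat.le_div_iff_mul_le ht).mpr (by nlinarith)
    norm_cast; nlinarith
  calc (t : ℝ) ^ 2 * (c * ↑(n / t) ^ (1 + α)) ≤ t ^ 2 * G₀.edgeSet.ncard := by gcongr
    _ ≤ _ := by rw [sq]; exact_mod_cast hblowup
end

section
/- Let G be a K_{s,s}-free graph and v a vertex with deg(v) ≥ 6^s·s. Then the number of induced paths x–v–y (with x, y ∈ N(v), x ≠ y, and xy not an edge of G) is at least deg(v)²/4. -/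
/-!
Among the `n² - n` ordered pairs of distinct neighbours of `v`, the non-adjacent ones count every
induced path twice, so it suffices that at most `n²/3` of them are adjacent: then
`n² - n - n²/3 ≥ n²/2` as soon as `n ≥ 6`. This is the Kővári–Sós–Turán bound. Any `s` vertices
have fewer than `s` common neighbours, so double counting pairs (vertex, `s`-set of its neighbours)
gives `∑ C(d(u), s) ≤ (s - 1) C(n, s)`; combined with `(d - s)^s ≤ s! C(d, s)` and the power mean
inequality this forces the average degree below `n/3` once `n ≥ 6^s s`.
-/

open SimpleGraph

open Finset Nat

theorem Finset.card_filter_offDiag_eq_two_mul {α : Type*} [DecidableEq α] {r : α → α → Prop}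
    [DecidableRel r] (hr : ∀ x y, r x y → r y x) (A : Finset α) :
    #{p ∈ A.offDiag | r p.1 p.2} =
      2 * #{S ∈ A.powersetCard 2 | ∀ x ∈ S, ∀ y ∈ S, x ≠ y → r x y} := by
  rw [mul_comm, card_eq_sum_card_fiberwise (f := fun p => ({p.1, p.2} : Finset α))]
  · refine sum_const_nat fun S hS => ?_
    obtain ⟨⟨hSA, hS2⟩, hSr⟩ := by simpa only [mem_filter, mem_powersetCard] using hS
    obtain ⟨a, b, hab, rfl⟩ := card_eq_two.1 hS2
    refine card_eq_two.2 ⟨(a, b), (b, a), by simp [hab], ?_⟩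
    ext ⟨x, y⟩
    simp only [mem_filter, mem_offDiag, mem_insert, mem_singleton, Prod.mk.injEq]
    constructor
    · rintro ⟨-, h⟩
      have := congrArg (fun S : Finset α => (S : Set α)) h
      simp only [coe_pair] at this
      exact Set.pair_eq_pair_iff.1 this
    · rintro (⟨rfl, rfl⟩ | ⟨rfl, rfl⟩)
      · exact ⟨⟨⟨hSA (by simp), hSA (by simp), hab⟩, hSr x (by simp) y (by simp) hab⟩, rfl⟩
      · exact ⟨⟨⟨hSA (by simp), hSA (by simp), hab.symm⟩, hSr x (by simp) y (by simp) hab.symm⟩,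
          pair_comm _ _⟩
  · intro p hp
    obtain ⟨a, b⟩ := p
    obtain ⟨⟨ha, hb, hab⟩, hr'⟩ := by simpa only [mem_coe, mem_filter, mem_offDiag] using hp
    simp only [mem_coe, mem_filter, mem_powersetCard, card_pair hab, insert_subset_iff,
      singleton_subset_iff]
    refine ⟨⟨⟨ha, hb⟩, trivial⟩, ?_⟩
    simp only [mem_insert, mem_singleton]
    rintro x (rfl | rfl) y (rfl | rfl) hxy <;>
      first | exact absurd rfl hxy | exact hr' | exact hr _ _ hr'

theorem SimpleGraph.card_filter_offDiag_adj {V : Type*} (G : SimpleGraph V) [DecidableRel G.Adj]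
    (A : Finset V) : #{p ∈ A.offDiag | G.Adj p.1 p.2} = ∑ u ∈ A, #{w ∈ A | G.Adj u w} := by
  have : {p ∈ A.offDiag | G.Adj p.1 p.2} = {p ∈ A ×ˢ A | G.Adj p.1 p.2} := by
    ext ⟨x, y⟩
    simp only [mem_filter, mem_offDiag, mem_product]
    exact ⟨fun h => ⟨⟨h.1.1, h.1.2.1⟩, h.2⟩, fun h => ⟨⟨h.1.1, h.1.2, h.2.ne⟩, h.2⟩⟩
  rw [this, card_filter, sum_product]
  simp only [card_filter]

namespace KssFree

variable {V : Type*} {G : SimpleGraph V} {s : ℕ}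

theorem pos (hG : KssFree s G) : 0 < s := by
  refine Nat.pos_of_ne_zero fun hs => ?_
  subst hs
  refine hG ⟨Sum.elim Fin.elim0 Fin.elim0, ?_⟩ ?_ <;> rintro (a | a) <;> exact a.elim0

theorem not_isCompleteBetween (hG : KssFree s G) {U T : Finset V} (hU : #U = s) (hT : #T = s) :
    ¬ G.IsCompleteBetween U T := fun h =>
  let f := Copy.completeBipartiteGraph (α := Fin s) (β := Fin s) U T (by simpa) (by simpa) h
  hG f.toHom f.injective

theorem card_lt_of_isCompleteBetween (hG : KssFree s G) {U T : Finset V} (hT : #T = s)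
    (hUT : G.IsCompleteBetween U T) : #U < s := by
  by_contra! h
  obtain ⟨U', hU'U, hU'⟩ := exists_subset_card_eq h
  exact hG.not_isCompleteBetween hU' hT fun u hu t ht => hUT (hU'U hu) ht

variable [DecidableEq V] [DecidableRel G.Adj]

theorem sum_choose_card_adj_le (hG : KssFree s G) (A B : Finset V) :
    ∑ u ∈ A, (#{w ∈ B | G.Adj u w}).choose s ≤ (s - 1) * (#B).choose s := by
  set r : V → Finset V → Prop := fun u T => T ⊆ {w ∈ B | G.Adj u w}
  calc ∑ u ∈ A, (#{w ∈ B | G.Adj u w}).choose s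
      = ∑ u ∈ A, #((B.powersetCard s).bipartiteAbove r u) := by
        refine sum_congr rfl fun u _ => ?_
        rw [← card_powersetCard]
        congr 1
        ext T
        simp only [mem_bipartiteAbove, mem_powersetCard, r]
        exact ⟨fun h => ⟨⟨h.1.trans (filter_subset _ _), h.2⟩, h.1⟩, fun h => ⟨h.2, h.1.2⟩⟩
    _ = ∑ T ∈ B.powersetCard s, #(A.bipartiteBelow r T) :=
        sum_card_bipartiteAbove_eq_sum_card_bipartiteBelow r
    _ ≤ ∑ T ∈ B.powersetCard s, (s - 1) := sum_le_sum fun T hT => by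
        refine Nat.le_sub_one_of_lt (hG.card_lt_of_isCompleteBetween (mem_powersetCard.1 hT).2 ?_)
        intro u hu t ht
        exact (mem_filter.1 (((mem_bipartiteBelow r).1 hu).2 ht)).2
    _ = (s - 1) * (#B).choose s := by rw [sum_const, card_powersetCard, smul_eq_mul, mul_comm]

theorem sum_pow_card_adj_sub_le (hG : KssFree s G) (A B : Finset V) :
    ∑ u ∈ A, (#{w ∈ B | G.Adj u w} - s) ^ s ≤ (s - 1) * #B ^ s :=
  calc ∑ u ∈ A, (#{w ∈ B | G.Adj u w} - s) ^ s
      ≤ ∑ u ∈ A, s ! * (#{w ∈ B | G.Adj u w}).choose s := sum_le_sum fun u _ => by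
        rw [← descFactorial_eq_factorial_mul_choose]
        exact (Nat.pow_le_pow_left (by omega) s).trans (pow_sub_le_descFactorial _ s)
    _ = s ! * ∑ u ∈ A, (#{w ∈ B | G.Adj u w}).choose s := (mul_sum ..).symm
    _ ≤ s ! * ((s - 1) * (#B).choose s) := Nat.mul_le_mul_left _ (hG.sum_choose_card_adj_le A B)
    _ = (s - 1) * (#B).descFactorial s := by rw [descFactorial_eq_factorial_mul_choose]; ring
    _ ≤ (s - 1) * #B ^ s := Nat.mul_le_mul_left _ (descFactorial_le_pow _ s)

theorem three_mul_sum_card_adj_le (hG : KssFree s G) {A : Finset V} (hA : 6 ^ s * s ≤ #A) :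
    3 * ∑ u ∈ A, #{w ∈ A | G.Adj u w} ≤ #A ^ 2 := by
  obtain ⟨r, rfl⟩ : ∃ r, s = r + 1 := ⟨s - 1, (Nat.succ_pred_eq_of_pos hG.pos).symm⟩
  set n := #A
  set m : V → ℕ := fun u => #{w ∈ A | G.Adj u w} - (r + 1)
  by_contra! h
  have h6 : 6 * (r + 1) ≤ n :=
    (Nat.mul_le_mul_right _ (le_self_pow (a := 6) (by norm_num) r.succ_ne_zero)).trans hA
  have hD : ∑ u ∈ A, #{w ∈ A | G.Adj u w} ≤ ∑ u ∈ A, m u + n * (r + 1) := by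
    rw [← smul_eq_mul, ← sum_const, ← sum_add_distrib]
    exact sum_le_sum fun u _ => le_tsub_add
  have hM : n ^ 2 < 6 * ∑ u ∈ A, m u := by nlinarith
  have key : n * n ^ (2 * r + 1) < 6 ^ (r + 1) * r * n ^ (2 * r + 1) := calc
      n * n ^ (2 * r + 1) = (n ^ 2) ^ (r + 1) := by ring
      _ < (6 * ∑ u ∈ A, m u) ^ (r + 1) := Nat.pow_lt_pow_left hM (by omega)
      _ = 6 ^ (r + 1) * (∑ u ∈ A, m u) ^ (r + 1) := mul_pow ..
      _ ≤ 6 ^ (r + 1) * (n ^ r * ∑ u ∈ A, m u ^ (r + 1)) :=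
        Nat.mul_le_mul_left _ (pow_sum_le_card_mul_sum_pow (fun _ _ => Nat.zero_le _) r)
      _ ≤ 6 ^ (r + 1) * (n ^ r * (r * n ^ (r + 1))) := by
        gcongr; simpa using hG.sum_pow_card_adj_sub_le A A
      _ = 6 ^ (r + 1) * r * n ^ (2 * r + 1) := by ring
  have hn : n < 6 ^ (r + 1) * r := Nat.lt_of_mul_lt_mul_right key
  nlinarith

theorem sq_card_le_four_mul_card_indep_pairs (hG : KssFree s G) {A : Finset V}
    (hA : 6 ^ s * s ≤ #A) :
    #A ^ 2 ≤ 4 * #{S ∈ A.powersetCard 2 | ∀ x ∈ S, ∀ y ∈ S, x ≠ y → ¬ G.Adj x y} := by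
  have h6 : 6 ≤ #A := ((Nat.le_mul_of_pos_right _ hG.pos).trans'
    (le_self_pow (by norm_num) hG.pos.ne')).trans hA
  have hsplit := card_filter_add_card_filter_not (s := A.offDiag) (fun p => G.Adj p.1 p.2)
  rw [G.card_filter_offDiag_adj, offDiag_card,
    card_filter_offDiag_eq_two_mul (r := fun x y => ¬ G.Adj x y) fun x y h h' => h h'.symm]
    at hsplit
  have hkst := hG.three_mul_sum_card_adj_le hA
  have hsq := Nat.le_mul_self #A
  zify [hsq] at hsplit hkst h6 ⊢
  nlinarith [mul_le_mul_of_nonneg_right h6 (Int.natCast_nonneg #A)]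

end KssFree

theorem stmt_9_general {V : Type*} (G : SimpleGraph V) (s : ℕ)
    (hfree : KssFree s G) (v : V)
    (hdeg : (6 : ℝ) ^ s * s ≤ (G.neighborSet v).ncard) :
    ((G.neighborSet v).ncard : ℝ) ^ 2 / 4 ≤
      ({S : Finset V | S.card = 2 ∧ ↑S ⊆ G.neighborSet v ∧
        ∀ x ∈ S, ∀ y ∈ S, x ≠ y → ¬ G.Adj x y}.ncard : ℝ) := by
  classical
  have hs : (0 : ℝ) < s := by exact_mod_cast hfree.pos
  have hfin := Set.finite_of_ncard_pos <|
    Nat.cast_pos.1 ((by positivity : (0 : ℝ) < 6 ^ s * s).trans_le hdeg)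
  set A := hfin.toFinset
  have hA : (G.neighborSet v).ncard = #A := Set.ncard_eq_toFinset_card _ hfin
  have hset : {S : Finset V | S.card = 2 ∧ ↑S ⊆ G.neighborSet v ∧
      ∀ x ∈ S, ∀ y ∈ S, x ≠ y → ¬ G.Adj x y} =
      ↑{S ∈ A.powersetCard 2 | ∀ x ∈ S, ∀ y ∈ S, x ≠ y → ¬ G.Adj x y} := by
    ext S
    simp [A, ← coe_subset, and_assoc, and_comm]
  rw [hset, Set.ncard_coe_finset, hA]
  rw [hA] at hdeg
  rw [div_le_iff₀ (by norm_num), mul_comm]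
  exact_mod_cast hfree.sq_card_le_four_mul_card_indep_pairs (by exact_mod_cast hdeg)

theorem stmt_9 {V : Type*} [Fintype V] (G : SimpleGraph V) (s : ℕ)
    (hfree : KssFree s G) (v : V)
    (hdeg : (6 : ℝ) ^ s * s ≤ (G.neighborSet v).ncard) :
    ((G.neighborSet v).ncard : ℝ) ^ 2 / 4 ≤
      ({S : Finset V | S.card = 2 ∧ ↑S ⊆ G.neighborSet v ∧
        ∀ x ∈ S, ∀ y ∈ S, x ≠ y → ¬ G.Adj x y}.ncard : ℝ) :=
  stmt_9_general G s hfree v hdeg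
end

section
/- Let G be a bipartite graph with parts X and Y such that every vertex of X has degree at least a and every vertex of Y has degree at least b. Then the number of homomorphisms from the cycle C_{2k} to G is at least a^k·b^k. -/
open SimpleGraph Finset Matrix


private lemma walk_ext {V : Type*} {G : SimpleGraph V} :
    ∀ {u v : V} (p q : G.Walk u v), p.length = q.length →
      (∀ i, p.getVert i = q.getVert i) → p = q := by
  intro u v p
  induction p with
  | nil =>
    intro q hl hv
    cases q with
    | nil => rfl
    | cons h q => simp at hl
  | cons h p ih =>
    intro q hl hv
    cases q with
    | nil => simp at hl
    | cons h2 q =>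
      have hw : p.getVert 0 = q.getVert 0 := by
        have := hv 1
        simpa [SimpleGraph.Walk.getVert_cons_succ] using this
      rw [p.getVert_zero, q.getVert_zero] at hw
      subst hw
      have : p = q := ih q (by simpa using hl) (fun i => by
        have := hv (i + 1)
        simpa [SimpleGraph.Walk.getVert_cons_succ] using this)
      subst this
      rfl

private lemma adj_helper {V : Type*} {G : SimpleGraph V} {n : ℕ} (hn : 2 ≤ n) {v : V}
    (p : G.Walk v v) (hp : p.length = n) (i j : Fin n) (hij : (j - i).val = 1) :
    G.Adj (p.getVert i.val) (p.getVert j.val) := by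
  haveI : NeZero n := ⟨by omega⟩
  have hj : j.val = (1 + i.val) % n := by
    conv_lhs => rw [show j = (j - i) + i by abel]
    rw [Fin.add_def, hij]
  have hlt : i.val < n := i.isLt
  have hadj := p.adj_getVert_succ (i := i.val) (by omega)
  by_cases hc : i.val + 1 < n
  · have hjv : j.val = i.val + 1 := by rw [hj, Nat.mod_eq_of_lt (by omega)]; omega
    rwa [hjv]
  · have hone : 1 + i.val = n := by omega
    have hj0 : j.val = 0 := by rw [hj, hone, Nat.mod_self]
    have hend : p.getVert (i.val + 1) = v := p.getVert_of_length_le (by omega)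
    rw [hend] at hadj
    rwa [hj0, p.getVert_zero]

private def homOfClosedWalk {V : Type*} {G : SimpleGraph V} {n : ℕ} (hn : 2 ≤ n) {v : V}
    (p : G.Walk v v) (hp : p.length = n) : cycleGraph n →g G where
  toFun i := p.getVert i.val
  map_rel' := by
    intro i j hij
    rw [cycleGraph_adj'] at hij
    rcases hij with h | h
    · exact (adj_helper hn p hp j i h).symm
    · exact adj_helper hn p hp i j h

private lemma card_closed_le {V : Type*} [Fintype V] (G : SimpleGraph V) (n : ℕ) (hn : 2 ≤ n) :
    Nat.card (Σ v : V, {p : G.Walk v v | p.length = n}) ≤ Nat.card (cycleGraph n →g G) := by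
  haveI : Finite (cycleGraph n →g G) :=
    Finite.of_injective (fun f => (f : Fin n → V)) DFunLike.coe_injective
  apply Nat.card_le_card_of_injective
    (fun x => homOfClosedWalk hn x.2.1 x.2.2)
  rintro ⟨v, p, hp⟩ ⟨w, q, hq⟩ h
  simp only [Set.mem_setOf_eq] at hp hq
  have hfun : ∀ i : Fin n, p.getVert i.val = q.getVert i.val := by
    intro i
    exact congrFun (congrArg DFunLike.coe h) i
  have hv : v = w := by
    have := hfun ⟨0, by omega⟩
    simpa using this
  subst hv
  have hpq : p = q := by
    apply walk_ext p q (by rw [hp, hq])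
    intro i
    by_cases hi : i < n
    · exact hfun ⟨i, hi⟩
    · rw [p.getVert_of_length_le (by omega), q.getVert_of_length_le (by omega)]
  subst hpq
  rfl

theorem stmt_14 {V : Type*} [Fintype V] (G : SimpleGraph V) (X Y : Set V)
    (k : ℕ) (hk : 0 < k) (a b : ℝ) (ha : 0 < a) (hb : 0 < b)
    (hcover : ∀ v : V, v ∈ X ∨ v ∈ Y) (hdisj : Disjoint X Y)
    (hX : X.Nonempty) (hY : Y.Nonempty)
    (hedge : ∀ u v : V, G.Adj u v → (u ∈ X ∧ v ∈ Y) ∨ (u ∈ Y ∧ v ∈ X))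
    (hda : ∀ x ∈ X, a ≤ (G.neighborSet x).ncard)
    (hdb : ∀ y ∈ Y, b ≤ (G.neighborSet y).ncard) :
    a ^ k * b ^ k ≤ Nat.card (cycleGraph (2 * k) →g G) := by
  classical
  haveI : Nonempty V := ⟨hX.choose⟩
  set A : Matrix V V ℝ := G.adjMatrix ℝ with hA
  set F : ℕ → V → ℝ := fun j => A ^ j *ᵥ (fun _ => (1:ℝ)) with hF
  set t : ℕ → ℝ := fun j => ∑ u, F j u with ht
  set nV : ℝ := (Fintype.card V : ℝ) with hnV
  have hnV0 : 0 < nV := by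
    rw [hnV]; exact_mod_cast Fintype.card_pos
  have hsym : ∀ j : ℕ, (A ^ j)ᵀ = A ^ j := by
    intro j; rw [Matrix.transpose_pow, hA, transpose_adjMatrix]
  have hdeg : ∀ w : V, F 1 w = G.degree w := by
    intro w
    simp [hF, pow_one, hA, adjMatrix_mulVec_apply]
  have hncard : ∀ w : V, ((G.neighborSet w).ncard : ℝ) = G.degree w := by
    intro w
    rw [← Nat.card_coe_set_eq, Nat.card_eq_fintype_card, card_neighborSet_eq_degree]
  have hdot : ∀ i j : ℕ, F i ⬝ᵥ F j = t (i + j) := by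
    intro i j
    have h1 : F i ⬝ᵥ F j = (F i ᵥ* A ^ j) ⬝ᵥ (fun _ => (1:ℝ)) := by
      rw [hF]; exact Matrix.dotProduct_mulVec _ _ _
    have h2 : F i ᵥ* A ^ j = F (i + j) := by
      rw [← hsym j, Matrix.vecMul_transpose, hF, Matrix.mulVec_mulVec, ← pow_add,
        add_comm j i]
    rw [h1, h2, ht]
    simp [dotProduct]
  have ht0 : t 0 = nV := by
    simp [ht, hF, Matrix.one_mulVec, hnV]
  have hF2 : ∀ u : V, a * b ≤ F 2 u := by
    intro u
    have hF2u : F 2 u = ∑ w ∈ G.neighborFinset u, F 1 w := by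
      have h : F 2 = A *ᵥ F 1 := by
        rw [hF, Matrix.mulVec_mulVec, ← pow_succ']
      rw [h, hA, adjMatrix_mulVec_apply]
    rcases hcover u with hu | hu
    · have hnbY : ∀ w ∈ G.neighborFinset u, w ∈ Y := by
        intro w hw
        rw [mem_neighborFinset] at hw
        rcases hedge u w hw with ⟨_, h2⟩ | ⟨h1, _⟩
        · exact h2
        · exact ((Set.disjoint_left.mp hdisj hu) h1).elim
      have hdu : a ≤ G.degree u := by
        have := hda u hu; rwa [hncard u] at this
      calc a * b ≤ (G.degree u : ℝ) * b := mul_le_mul_of_nonneg_right hdu hb.le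
        _ = ∑ _w ∈ G.neighborFinset u, b := by
            rw [Finset.sum_const, card_neighborFinset_eq_degree, nsmul_eq_mul]
        _ ≤ ∑ w ∈ G.neighborFinset u, F 1 w := by
            apply Finset.sum_le_sum
            intro w hw
            rw [hdeg w, ← hncard w]
            exact hdb w (hnbY w hw)
        _ = F 2 u := hF2u.symm
    · have hnbX : ∀ w ∈ G.neighborFinset u, w ∈ X := by
        intro w hw
        rw [mem_neighborFinset] at hw
        rcases hedge u w hw with ⟨h1, _⟩ | ⟨_, h2⟩
        · exact ((Set.disjoint_left.mp hdisj h1) hu).elim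
        · exact h2
      have hdu : b ≤ G.degree u := by
        have := hdb u hu; rwa [hncard u] at this
      calc a * b = b * a := mul_comm a b
        _ ≤ (G.degree u : ℝ) * a := mul_le_mul_of_nonneg_right hdu ha.le
        _ = ∑ _w ∈ G.neighborFinset u, a := by
            rw [Finset.sum_const, card_neighborFinset_eq_degree, nsmul_eq_mul]
        _ ≤ ∑ w ∈ G.neighborFinset u, F 1 w := by
            apply Finset.sum_le_sum
            intro w hw
            rw [hdeg w, ← hncard w]
            exact hda w (hnbX w hw)
        _ = F 2 u := hF2u.symm
  have ht2 : nV * (a * b) ≤ t 2 := by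
    rw [ht, hnV]
    calc (Fintype.card V : ℝ) * (a * b) = ∑ _u : V, (a * b) := by
          rw [Finset.sum_const, nsmul_eq_mul, Finset.card_univ]
      _ ≤ ∑ u : V, F 2 u := Finset.sum_le_sum fun u _ => hF2 u
  have hCS : ∀ j : ℕ, t (2 * j + 2) ^ 2 ≤ t (2 * j) * t (2 * j + 4) := by
    intro j
    have e1 : t (2 * j + 2) = ∑ u, F j u * F (j + 2) u := by
      rw [show 2 * j + 2 = j + (j + 2) by omega, ← hdot j (j + 2)]
      simp [dotProduct]
    have e2 : t (2 * j) = ∑ u, F j u ^ 2 := by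
      rw [show 2 * j = j + j by omega, ← hdot j j]
      simp [dotProduct, pow_two]
    have e3 : t (2 * j + 4) = ∑ u, F (j + 2) u ^ 2 := by
      rw [show 2 * j + 4 = (j + 2) + (j + 2) by omega, ← hdot (j + 2) (j + 2)]
      simp [dotProduct, pow_two]
    rw [e1, e2, e3]
    exact Finset.sum_mul_sq_le_sq_mul_sq _ _ _
  have hab : 0 < a * b := mul_pos ha hb
  have hind : ∀ j : ℕ, nV * (a * b) ^ j ≤ t (2 * j) ∧ (a * b) * t (2 * j) ≤ t (2 * j + 2) := by
    intro j
    induction j with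
    | zero =>
      constructor
      · simp [ht0]
      · simpa [ht0, mul_comm] using ht2
    | succ j ih =>
      obtain ⟨h1, h2⟩ := ih
      have htj : 0 < t (2 * j) := lt_of_lt_of_le (by positivity) h1
      have hrw1 : 2 * (j + 1) = 2 * j + 2 := by omega
      rw [hrw1, show 2 * j + 2 + 2 = 2 * j + 4 by omega]
      have hfirst : nV * (a * b) ^ (j + 1) ≤ t (2 * j + 2) := by
        calc nV * (a * b) ^ (j + 1) = (a * b) * (nV * (a * b) ^ j) := by ring
          _ ≤ (a * b) * t (2 * j) := mul_le_mul_of_nonneg_left h1 hab.le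
          _ ≤ t (2 * j + 2) := h2
      refine ⟨hfirst, ?_⟩
      have ht2j2 : 0 < t (2 * j + 2) := lt_of_lt_of_le (by positivity) hfirst
      have step : (a * b) * t (2 * j + 2) * t (2 * j) ≤ t (2 * j + 4) * t (2 * j) := by
        calc (a * b) * t (2 * j + 2) * t (2 * j)
            = t (2 * j + 2) * ((a * b) * t (2 * j)) := by ring
          _ ≤ t (2 * j + 2) * t (2 * j + 2) := mul_le_mul_of_nonneg_left h2 ht2j2.le
          _ = t (2 * j + 2) ^ 2 := (sq (t (2 * j + 2))).symm
          _ ≤ t (2 * j) * t (2 * j + 4) := hCS j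
          _ = t (2 * j + 4) * t (2 * j) := mul_comm _ _
      exact le_of_mul_le_mul_right step htj
  have hmain : nV * (a * b) ^ k ≤ t (2 * k) := (hind k).1
  have htrace : t (2 * k) ≤ nV * ∑ u, (A ^ (2 * k)) u u := by
    have e : t (2 * k) = ∑ u, (F k u) ^ 2 := by
      rw [show 2 * k = k + k by omega, ← hdot k k]
      simp [dotProduct, pow_two]
    have hrow : ∀ u : V, (F k u) ^ 2 ≤ nV * ∑ v, ((A ^ k) u v) ^ 2 := by
      intro u
      have e1 : F k u = ∑ v, ((A ^ k) u v) * 1 := by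
        simp [hF, Matrix.mulVec, dotProduct]
      calc (F k u) ^ 2 = (∑ v, ((A ^ k) u v) * 1) ^ 2 := by rw [e1]
        _ ≤ (∑ v, ((A ^ k) u v) ^ 2) * (∑ _v : V, (1:ℝ) ^ 2) :=
            Finset.sum_mul_sq_le_sq_mul_sq _ _ _
        _ = nV * ∑ v, ((A ^ k) u v) ^ 2 := by
            simp [hnV, Finset.card_univ, mul_comm]
    have hdiag : ∀ u : V, ∑ v, ((A ^ k) u v) ^ 2 = (A ^ (2 * k)) u u := by
      intro u
      rw [show 2 * k = k + k by omega, pow_add, Matrix.mul_apply]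
      apply Finset.sum_congr rfl
      intro v _
      have hvu : (A ^ k) v u = (A ^ k) u v := by
        conv_lhs => rw [← hsym k]
        exact Matrix.transpose_apply _ _ _
      rw [hvu, pow_two]
    calc t (2 * k) = ∑ u, (F k u) ^ 2 := e
      _ ≤ ∑ u, nV * ∑ v, ((A ^ k) u v) ^ 2 := Finset.sum_le_sum fun u _ => hrow u
      _ = nV * ∑ u, ∑ v, ((A ^ k) u v) ^ 2 := by rw [Finset.mul_sum]
      _ = nV * ∑ u, (A ^ (2 * k)) u u := by
          congr 1
          exact Finset.sum_congr rfl fun u _ => hdiag u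
  have htr2 : (a * b) ^ k ≤ ∑ u, (A ^ (2 * k)) u u :=
    le_of_mul_le_mul_left (hmain.trans htrace) hnV0
  have hcard : ∑ u, (A ^ (2 * k)) u u
      = ((Nat.card (Σ v : V, {p : G.Walk v v | p.length = 2 * k}) : ℕ) : ℝ) := by
    rw [Nat.card_eq_fintype_card, Fintype.card_sigma]
    push_cast
    apply Finset.sum_congr rfl
    intro v _
    rw [hA]
    exact G.adjMatrix_pow_apply_eq_card_walk (2 * k) v v
  have hfin := card_closed_le G (2 * k) (by omega)
  calc a ^ k * b ^ k = (a * b) ^ k := (mul_pow a b k).symm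
    _ ≤ ∑ u, (A ^ (2 * k)) u u := htr2
    _ = _ := hcard
    _ ≤ (Nat.card (cycleGraph (2 * k) →g G) : ℝ) := by exact_mod_cast hfin
end
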